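/- arXiv:2312.06906 — 4 statements merged into one kernel-verified Lean document; each statement's English description precedes it below -/
import Mathlib

section
/- Let X be a simple unweighted graph on m ≥ 3 vertices with Laplacian matrix L_X, and let u ≠ v be vertices of X. Then u and v are strongly cospectral with respect to the join Laplacian L if and only if u and v are strongly cospectral with respect to L_X. -/
open Matrix Complex

/-- Transition matrix `exp(itM)` of the continuous quantum walk whose Hamiltonian is the
real symmetric matrix `M` (the matrix exponential is taken over `ℂ`). -/
noncomputable def transU {N : Type*} [Fintype N] [DecidableEq N]
    (M : Matrix N N ℝ) (t : ℝ) : Matrix N N ℂ :=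
  NormedSpace.exp ((Complex.I * (t : ℂ)) • M.map (fun x : ℝ => (x : ℂ)))

/-- Laplacian matrix of the join `X ∨ Y` of two weighted graphs with Laplacian
matrices `LX` and `LY`. -/
noncomputable def joinL (m n : ℕ) (LX : Matrix (Fin m) (Fin m) ℝ)
    (LY : Matrix (Fin n) (Fin n) ℝ) :
    Matrix (Fin m ⊕ Fin n) (Fin m ⊕ Fin n) ℝ :=
  Matrix.fromBlocks (LX + (n : ℝ) • (1 : Matrix (Fin m) (Fin m) ℝ))
    (-(Matrix.of fun _ _ => (1 : ℝ)))
    (-(Matrix.of fun _ _ => (1 : ℝ)))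
    (LY + (m : ℝ) • (1 : Matrix (Fin n) (Fin n) ℝ))

/-- Adjacency matrix of the join `X ∨ Y` of two weighted graphs with adjacency
matrices `AX` and `AY`. -/
noncomputable def joinA (m n : ℕ) (AX : Matrix (Fin m) (Fin m) ℝ)
    (AY : Matrix (Fin n) (Fin n) ℝ) :
    Matrix (Fin m ⊕ Fin n) (Fin m ⊕ Fin n) ℝ :=
  Matrix.fromBlocks AX (Matrix.of fun _ _ => (1 : ℝ))
    (Matrix.of fun _ _ => (1 : ℝ)) AY

/-- `lam` is an eigenvalue of the matrix `M`. -/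
def IsEigenvalue {N : Type*} [Fintype N] (M : Matrix N N ℝ) (lam : ℝ) : Prop :=
  ∃ w : N → ℝ, w ≠ 0 ∧ M.mulVec w = lam • w

/-- The eigenvalue support `σ_u(M)` of the vertex `u`: all eigenvalues `lam` of `M` having
an eigenvector `w` with `w u ≠ 0`. -/
def eigSupport {N : Type*} [Fintype N] (M : Matrix N N ℝ) (u : N) : Set ℝ :=
  {lam | ∃ w : N → ℝ, w ≠ 0 ∧ M.mulVec w = lam • w ∧ w u ≠ 0}

/-- Vertices `u` and `v` are strongly cospectral with respect to `M`: for each eigenvalue,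
either all eigenvectors have equal `u`,`v` entries, or all have opposite `u`,`v` entries. -/
def StronglyCospectral {N : Type*} [Fintype N] (M : Matrix N N ℝ) (u v : N) : Prop :=
  ∀ lam : ℝ, IsEigenvalue M lam →
    (∀ w : N → ℝ, M.mulVec w = lam • w → w u = w v) ∨
    (∀ w : N → ℝ, M.mulVec w = lam • w → w u = -(w v))

/-- `σ_{uv}^-(M)`: eigenvalues in the support of `u` all of whose eigenvectors `w`
satisfy `w u = - w v`. -/
def sigmaMinus {N : Type*} [Fintype N] (M : Matrix N N ℝ) (u v : N) : Set ℝ :=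
  {lam | lam ∈ eigSupport M u ∧ ∀ w : N → ℝ, M.mulVec w = lam • w → w u = -(w v)}

/-- The vertex `u` is periodic with respect to `M`. -/
noncomputable def PeriodicAt {N : Type*} [Fintype N] [DecidableEq N]
    (M : Matrix N N ℝ) (u : N) : Prop :=
  ∃ τ : ℝ, 0 < τ ∧ ‖transU M τ u u‖ = 1

/-- Perfect state transfer occurs between vertices `u` and `v` with respect to `M`. -/
noncomputable def HasPST {N : Type*} [Fintype N] [DecidableEq N]
    (M : Matrix N N ℝ) (u v : N) : Prop :=
  ∃ τ : ℝ, 0 < τ ∧ ‖transU M τ u v‖ = 1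

/-!
The `X`-part `w` of an eigenvector of the join for `λ` satisfies `L_X w = (λ - n) w + (∑ z) 𝟏`,
so after centring it is an eigenvector of `L_X` for `λ - n`, and it already has zero sum unless
`λ ∈ {0, m + n}`; conversely zero-sum eigenvectors of `L_X` extend by zero to eigenvectors of the
join. Hence the sign condition transfers at every eigenvalue except at the kernel of `L_X` and at
the eigenvalue `m` of `L_X`, which on zero-sum vectors is the kernel of the Laplacian of the
complement `Xᶜ`. Both cases reduce to showing that `u` and `v` lie in one component of a graph `H`.
If not, the zero-sum vectors supported on the component of `u` form an `L_H`-invariant subspace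
spanned by eigenvectors, all of which vanish at `v` and hence at `u`; so that component is `{u}`,
and the centred indicator vector of `u`, a kernel vector, violates the sign condition since `H`
has at least three vertices.
-/

theorem LinearMap.IsSymmetric.le_of_forall_eigenvector_mem {E : Type*} [NormedAddCommGroup E]
    [InnerProductSpace ℝ E] [FiniteDimensional ℝ E] {T : E →ₗ[ℝ] E} (hT : T.IsSymmetric)
    {S U : Submodule ℝ E} (hS : ∀ x ∈ S, T x ∈ S)
    (h : ∀ (μ : ℝ), ∀ x ∈ S, T x = μ • x → x ∈ U) : S ≤ U := by
  have htop : ⨆ μ : ℝ, Module.End.eigenspace (T.restrict hS) μ = ⊤ :=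
    Submodule.orthogonal_eq_bot_iff.mp
      (hT.restrict_invariant hS).orthogonalComplement_iSup_eigenspaces_eq_bot
  intro x hx
  have hxtop : (⟨x, hx⟩ : S) ∈ ⨆ μ : ℝ, Module.End.eigenspace (T.restrict hS) μ := htop ▸ trivial
  suffices ⨆ μ : ℝ, Module.End.eigenspace (T.restrict hS) μ ≤ U.comap S.subtype from this hxtop
  refine iSup_le fun μ y hy => h μ y y.2 ?_
  exact congrArg Subtype.val (Module.End.mem_eigenspace_iff.mp hy)

theorem Matrix.IsHermitian.le_of_forall_eigenvector_mem {ι : Type*} [Fintype ι] [DecidableEq ι]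
    {M : Matrix ι ι ℝ} (hM : M.IsHermitian) {S U : Submodule ℝ (ι → ℝ)}
    (hS : ∀ x ∈ S, M *ᵥ x ∈ S) (h : ∀ (μ : ℝ), ∀ x ∈ S, M *ᵥ x = μ • x → x ∈ U) : S ≤ U := by
  let e := (WithLp.linearEquiv 2 ℝ (ι → ℝ)).toLinearMap
  intro x hx
  refine (isSymmetric_toEuclideanLin_iff.mpr hM).le_of_forall_eigenvector_mem
    (S := S.comap e) (U := U.comap e) (fun y hy => hS _ hy) (fun μ y hy hyμ => h μ _ hy ?_)
    (show WithLp.toLp 2 x ∈ S.comap e from hx)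
  exact congrArg WithLp.ofLp hyμ

theorem Matrix.sum_mulVec_eq_zero {ι : Type*} [Fintype ι] {A : Matrix ι ι ℝ} (hA : 1 ᵥ* A = 0)
    (x : ι → ℝ) : ∑ i, (A *ᵥ x) i = 0 := by
  rw [← one_dotProduct, dotProduct_mulVec, hA, zero_dotProduct]

theorem sum_eq_of_mulVec_add_smul_sub_eq_smul {k : ℕ} {A : Matrix (Fin k) (Fin k) ℝ}
    (hA : 1 ᵥ* A = 0) {w : Fin k → ℝ} {a c lam : ℝ} (h : A *ᵥ w + a • w - c • 1 = lam • w) :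
    a * ∑ i, w i - k * c = lam * ∑ i, w i := by
  have := congrArg (fun y => ∑ i, y i) h
  simpa [Finset.sum_add_distrib, Finset.sum_sub_distrib, ← Finset.mul_sum, sum_mulVec_eq_zero hA,
    mul_comm] using this

def EqOrNegOn {N : Type*} (W : Set (N → ℝ)) (u v : N) : Prop :=
  (∀ w ∈ W, w u = w v) ∨ (∀ w ∈ W, w u = -w v)

theorem EqOrNegOn.mono {N : Type*} {W W' : Set (N → ℝ)} {u v : N} (h : EqOrNegOn W u v)
    (hW : W' ⊆ W) : EqOrNegOn W' u v :=
  h.imp (fun h w hw => h w (hW hw)) (fun h w hw => h w (hW hw))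

theorem EqOrNegOn.sumElim_zero {N N' : Type*} {W : Set (N ⊕ N' → ℝ)} {u v : N}
    (h : EqOrNegOn W (Sum.inl u) (Sum.inl v)) : EqOrNegOn {w | Sum.elim w 0 ∈ W} u v :=
  h.imp (fun h _ hw => h _ hw) (fun h _ hw => h _ hw)

theorem stronglyCospectral_iff_forall_eqOrNegOn {N : Type*} [Fintype N] {M : Matrix N N ℝ}
    {u v : N} : StronglyCospectral M u v ↔ ∀ lam : ℝ, EqOrNegOn {w | M *ᵥ w = lam • w} u v := by
  refine ⟨fun h lam => ?_, fun h lam _ => h lam⟩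
  by_cases hlam : IsEigenvalue M lam
  · exact h lam hlam
  · left
    intro w hw
    obtain rfl : w = 0 := by
      by_contra hw0
      exact hlam ⟨w, hw0, hw⟩
    rfl

namespace SimpleGraph

variable {V : Type*} [Fintype V] [DecidableEq V] (G : SimpleGraph V) [DecidableRel G.Adj]

theorem one_vecMul_lapMatrix : 1 ᵥ* G.lapMatrix ℝ = 0 := by
  rw [← mulVec_transpose, (G.isSymm_lapMatrix ℝ).eq]
  exact G.lapMatrix_mulVec_const_eq_zero

variable {G}

theorem sum_eq_zero_of_lapMatrix_mulVec_eq_smul {μ : ℝ} (hμ : μ ≠ 0) {x : V → ℝ}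
    (hx : G.lapMatrix ℝ *ᵥ x = μ • x) : ∑ i, x i = 0 := by
  have h := sum_mulVec_eq_zero G.one_vecMul_lapMatrix x
  rw [hx] at h
  simpa [← Finset.mul_sum, hμ] using h

theorem eq_zero_of_lapMatrix_mulVec_eq_smul_of_neg {μ : ℝ} (hμ : μ < 0) {x : V → ℝ}
    (hx : G.lapMatrix ℝ *ᵥ x = μ • x) : x = 0 := by
  have h := (G.posSemidef_lapMatrix ℝ).dotProduct_mulVec_nonneg x
  rw [hx, star_trivial, dotProduct_smul, smul_eq_mul] at h
  exact dotProduct_self_eq_zero.mp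
    (le_antisymm (nonpos_of_mul_nonneg_right h hμ) (dotProduct_self_star_nonneg x))

variable (G) in
theorem lapMatrix_add_lapMatrix_compl :
    G.lapMatrix ℝ + Gᶜ.lapMatrix ℝ = (Fintype.card V : ℝ) • 1 - of fun _ _ => 1 := by
  ext i j
  by_cases hij : i = j
  · subst hij
    have hdeg : (G.degree i : ℝ) + Gᶜ.degree i = Fintype.card V - 1 := by
      have := G.degree_lt_card_verts i
      rw [degree_compl, Nat.sub_sub, Nat.cast_sub (by omega)]
      push_cast
      ring
    simpa [lapMatrix, degMatrix] using hdeg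
  · by_cases hadj : G.Adj i j <;> simp [lapMatrix, degMatrix, hij, hadj]

variable (G) in
theorem lapMatrix_compl_mulVec_of_sum_eq_zero {x : V → ℝ} (hx : ∑ i, x i = 0) :
    Gᶜ.lapMatrix ℝ *ᵥ x = (Fintype.card V : ℝ) • x - G.lapMatrix ℝ *ᵥ x := by
  rw [eq_sub_iff_add_eq', ← add_mulVec, lapMatrix_add_lapMatrix_compl, sub_mulVec, smul_mulVec,
    one_mulVec]
  ext i
  simp [mulVec, dotProduct, hx]

theorem subset_singleton_of_forall_eigenvector_apply_eq_zero {K : Set V}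
    (hK : ∀ i j, G.Adj i j → i ∈ K → j ∈ K) {u : V} (hu : u ∈ K)
    (h : ∀ (μ : ℝ) (φ : V → ℝ), G.lapMatrix ℝ *ᵥ φ = μ • φ → (∀ i ∉ K, φ i = 0) →
      ∑ i, φ i = 0 → φ u = 0) :
    K ⊆ {u} := by
  let S : Submodule ℝ (V → ℝ) :=
    Submodule.pi Kᶜ (fun _ => ⊥) ⊓ LinearMap.ker (∑ i, LinearMap.proj i)
  have mem_S (x : V → ℝ) : x ∈ S ↔ (∀ i ∉ K, x i = 0) ∧ ∑ i, x i = 0 := by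
    simp [S]
  have hS : ∀ x ∈ S, G.lapMatrix ℝ *ᵥ x ∈ S := by
    intro x hx
    rw [mem_S] at hx ⊢
    refine ⟨fun i hi => ?_, sum_mulVec_eq_zero G.one_vecMul_lapMatrix x⟩
    rw [lapMatrix_mulVec_apply, hx.1 i hi, mul_zero, zero_sub, neg_eq_zero]
    refine Finset.sum_eq_zero fun j hj => hx.1 j fun hjK => hi ?_
    exact hK j i ((G.mem_neighborFinset i j).mp hj).symm hjK
  have hSu : S ≤ LinearMap.ker (LinearMap.proj u) :=
    (G.isHermitian_lapMatrix ℝ).le_of_forall_eigenvector_mem hS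
      fun μ φ hφ hφμ => h μ φ hφμ ((mem_S φ).mp hφ).1 ((mem_S φ).mp hφ).2
  intro i hi
  by_contra hiu
  have hψ : Pi.single u 1 - Pi.single i 1 ∈ S := by
    rw [mem_S]
    refine ⟨fun j hj => ?_, by simp⟩
    have hju : j ≠ u := by rintro rfl; exact hj hu
    have hji : j ≠ i := by rintro rfl; exact hj hi
    simp [hju, hji]
  simpa [Ne.symm hiu] using hSu hψ

theorem reachable_of_eqOrNegOn (hV : 3 ≤ Fintype.card V) {u v : V}
    (hker : EqOrNegOn {w | G.lapMatrix ℝ *ᵥ w = 0 ∧ ∑ i, w i = 0} u v)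
    (heig : ∀ (μ : ℝ) (φ : V → ℝ), G.lapMatrix ℝ *ᵥ φ = μ • φ → ∑ i, φ i = 0 → φ v = 0 →
      φ u = 0) :
    G.Reachable u v := by
  by_contra huv
  have hK : {i | G.Reachable u i} ⊆ {u} :=
    subset_singleton_of_forall_eigenvector_apply_eq_zero
      (fun _ _ hij hi => hi.trans hij.reachable) (Reachable.refl u)
      fun μ φ hφ hK hs => heig μ φ hφ hs (hK v huv)
  have hvu : v ≠ u := by rintro rfl; exact huv (Reachable.refl v)
  -- `u` is isolated, so this is a zero-sum kernel vector
  let t : V → ℝ := (Fintype.card V : ℝ) • Pi.single u 1 - 1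
  have ht : G.lapMatrix ℝ *ᵥ t = 0 ∧ ∑ i, t i = 0 := by
    constructor
    · rw [lapMatrix_mulVec_eq_zero_iff_forall_reachable]
      intro i j hij
      have : i = u ↔ j = u := ⟨fun h => hK (h ▸ hij), fun h => hK (h ▸ hij.symm)⟩
      simp [t, Pi.single_apply, this]
    · simp [t, Finset.sum_sub_distrib, ← Finset.mul_sum]
  have htu : t u = Fintype.card V - 1 := by simp [t]
  have htv : t v = -1 := by simp [t, hvu]
  have hV' : (3 : ℝ) ≤ Fintype.card V := by exact_mod_cast hV
  rcases hker with h | h <;> have htuv := h t ht <;> rw [htu, htv] at htuv <;> linarith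

theorem apply_eq_of_lapMatrix_mulVec_eq_card_smul (hV : 3 ≤ Fintype.card V) {u v : V}
    (h : ∀ μ : ℝ, EqOrNegOn {w | G.lapMatrix ℝ *ᵥ w = μ • w} u v) {φ : V → ℝ}
    (hφ : G.lapMatrix ℝ *ᵥ φ = (Fintype.card V : ℝ) • φ) : φ u = φ v := by
  have hreach : Gᶜ.Reachable u v := by
    refine reachable_of_eqOrNegOn hV ((h (Fintype.card V)).mono fun w hw => ?_)
      fun μ ψ hψ hs hv => ?_
    · have hw' := hw.1
      rw [lapMatrix_compl_mulVec_of_sum_eq_zero G hw.2, sub_eq_zero] at hw'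
      exact hw'.symm
    · have : G.lapMatrix ℝ *ᵥ ψ = ((Fintype.card V : ℝ) - μ) • ψ := by
        rw [lapMatrix_compl_mulVec_of_sum_eq_zero G hs] at hψ
        rw [sub_smul, ← hψ, sub_sub_cancel]
      rcases h (Fintype.card V - μ) with h | h <;> simp [h ψ this, hv]
  have hV0 : (Fintype.card V : ℝ) ≠ 0 := by
    have : 0 < Fintype.card V := by omega
    positivity
  have hker : Gᶜ.lapMatrix ℝ *ᵥ φ = 0 := by
    rw [lapMatrix_compl_mulVec_of_sum_eq_zero G
      (sum_eq_zero_of_lapMatrix_mulVec_eq_smul hV0 hφ), hφ, sub_self]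
  exact (lapMatrix_mulVec_eq_zero_iff_forall_reachable Gᶜ).mp hker u v hreach

end SimpleGraph

section Join

variable {m n : ℕ} {LX : Matrix (Fin m) (Fin m) ℝ} {LY : Matrix (Fin n) (Fin n) ℝ}
  {w : Fin m → ℝ} {z : Fin n → ℝ} {lam : ℝ}

theorem joinL_mulVec_elim :
    joinL m n LX LY *ᵥ Sum.elim w z =
      Sum.elim (LX *ᵥ w + (n : ℝ) • w - (∑ j, z j) • 1)
        (LY *ᵥ z + (m : ℝ) • z - (∑ i, w i) • 1) := by
  ext (i | j) <;> simp [joinL, mulVec, dotProduct, add_mul, Finset.sum_add_distrib, one_apply,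
    sub_eq_add_neg, add_comm]

theorem joinL_mulVec_elim_eq_smul_iff :
    joinL m n LX LY *ᵥ Sum.elim w z = lam • Sum.elim w z ↔
      LX *ᵥ w + (n : ℝ) • w - (∑ j, z j) • 1 = lam • w ∧
        LY *ᵥ z + (m : ℝ) • z - (∑ i, w i) • 1 = lam • z := by
  rw [joinL_mulVec_elim, ← Sum.elim_eq_iff]
  exact Iff.of_eq (congrArg _ (by ext (i | j) <;> rfl))

theorem joinL_mulVec_elim_zero {μ : ℝ} (hw : LX *ᵥ w = μ • w) (hs : ∑ i, w i = 0) :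
    joinL m n LX LY *ᵥ Sum.elim w 0 = (μ + n) • Sum.elim w 0 := by
  rw [joinL_mulVec_elim_eq_smul_iff]
  simp [hw, hs, add_smul]

theorem mulVec_sub_mean_of_joinL_mulVec_eq_smul (hX₁ : LX *ᵥ 1 = 0) (hX : 1 ᵥ* LX = 0)
    (hm : (m : ℝ) ≠ 0) (hx : joinL m n LX LY *ᵥ Sum.elim w z = lam • Sum.elim w z) :
    LX *ᵥ (w - ((∑ i, w i) / m) • 1) = (lam - n) • (w - ((∑ i, w i) / m) • 1) := by
  have hw := (joinL_mulVec_elim_eq_smul_iff.mp hx).1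
  have hs := sum_eq_of_mulVec_add_smul_sub_eq_smul hX hw
  rw [mulVec_sub, mulVec_smul, hX₁, smul_zero, sub_zero]
  ext i
  have hwi := congrFun hw i
  simp only [Pi.sub_apply, Pi.add_apply, Pi.smul_apply, smul_eq_mul, Pi.one_apply, mul_one] at hwi ⊢
  field_simp
  linear_combination m * hwi - hs

theorem sum_eq_zero_of_joinL_mulVec_eq_smul (hX : 1 ᵥ* LX = 0) (hY : 1 ᵥ* LY = 0)
    (h0 : lam ≠ 0) (hmn : lam ≠ m + n)
    (hx : joinL m n LX LY *ᵥ Sum.elim w z = lam • Sum.elim w z) : ∑ i, w i = 0 := by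
  obtain ⟨hw, hz⟩ := joinL_mulVec_elim_eq_smul_iff.mp hx
  have hsw := sum_eq_of_mulVec_add_smul_sub_eq_smul hX hw
  have hsz := sum_eq_of_mulVec_add_smul_sub_eq_smul hY hz
  have hsum : ∑ j, z j = -∑ i, w i := by
    have : lam * (∑ i, w i + ∑ j, z j) = 0 := by linarith
    linarith [(mul_eq_zero.mp this).resolve_left h0]
  have : (m + n - lam) * ∑ i, w i = 0 := by
    rw [hsum] at hsw
    linarith
  exact (mul_eq_zero.mp this).resolve_left (sub_ne_zero.mpr hmn.symm)

end Join

theorem stronglyCospectral_lapMatrix_of_joinL {m n : ℕ} (hm : 3 ≤ m) (G : SimpleGraph (Fin m))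
    [DecidableRel G.Adj] (LY : Matrix (Fin n) (Fin n) ℝ) {u v : Fin m}
    (h : StronglyCospectral (joinL m n (G.lapMatrix ℝ) LY) (Sum.inl u) (Sum.inl v)) :
    StronglyCospectral (G.lapMatrix ℝ) u v := by
  rw [stronglyCospectral_iff_forall_eqOrNegOn] at h ⊢
  have hlift (μ : ℝ) : EqOrNegOn {w | G.lapMatrix ℝ *ᵥ w = μ • w ∧ ∑ i, w i = 0} u v :=
    (h (μ + n)).sumElim_zero.mono fun _ hw => joinL_mulVec_elim_zero hw.1 hw.2
  intro μ
  by_cases hμ : μ = 0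
  · subst hμ
    have hreach : G.Reachable u v := by
      refine SimpleGraph.reachable_of_eqOrNegOn (by simpa using hm)
        ((hlift 0).mono fun w hw => ⟨by rw [zero_smul]; exact hw.1, hw.2⟩)
        fun μ φ hφ hs hv => ?_
      rcases hlift μ with h | h <;> simp [h φ ⟨hφ, hs⟩, hv]
    left
    intro w hw
    exact (G.lapMatrix_mulVec_eq_zero_iff_forall_reachable).mp (by simpa using hw) u v hreach
  · exact (hlift μ).mono fun w hw =>
      ⟨hw, SimpleGraph.sum_eq_zero_of_lapMatrix_mulVec_eq_smul hμ hw⟩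

theorem stronglyCospectral_joinL_of_lapMatrix {m n : ℕ} (hm : 3 ≤ m) (hn : 1 ≤ n)
    (G : SimpleGraph (Fin m)) [DecidableRel G.Adj] {LY : Matrix (Fin n) (Fin n) ℝ}
    (hLY : 1 ᵥ* LY = 0) {u v : Fin m} (h : StronglyCospectral (G.lapMatrix ℝ) u v) :
    StronglyCospectral (joinL m n (G.lapMatrix ℝ) LY) (Sum.inl u) (Sum.inl v) := by
  rw [stronglyCospectral_iff_forall_eqOrNegOn] at h ⊢
  intro lam
  have hcenter (w : Fin m → ℝ) (z : Fin n → ℝ)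
      (hx : joinL m n (G.lapMatrix ℝ) LY *ᵥ Sum.elim w z = lam • Sum.elim w z) :=
    mulVec_sub_mean_of_joinL_mulVec_eq_smul G.lapMatrix_mulVec_const_eq_zero
      G.one_vecMul_lapMatrix (by positivity) hx
  by_cases hplus : ∀ φ, G.lapMatrix ℝ *ᵥ φ = (lam - n) • φ → φ u = φ v
  · left
    intro x hx
    obtain ⟨w, z, rfl⟩ : ∃ w z, x = Sum.elim w z := ⟨_, _, (Sum.elim_comp_inl_inr x).symm⟩
    simpa using hplus _ (hcenter w z hx)
  · have hneg := (h (lam - n)).resolve_left hplus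
    have h0 : lam ≠ 0 := by
      rintro rfl
      refine hplus fun φ hφ => ?_
      have hn' : (1 : ℝ) ≤ n := by exact_mod_cast hn
      rw [SimpleGraph.eq_zero_of_lapMatrix_mulVec_eq_smul_of_neg (by linarith) hφ]
      rfl
    have hmn : lam ≠ m + n := by
      rintro rfl
      exact hplus fun φ hφ => SimpleGraph.apply_eq_of_lapMatrix_mulVec_eq_card_smul
        (by simpa using hm) h (by simpa using hφ)
    right
    intro x hx
    obtain ⟨w, z, rfl⟩ : ∃ w z, x = Sum.elim w z := ⟨_, _, (Sum.elim_comp_inl_inr x).symm⟩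
    have hs := sum_eq_zero_of_joinL_mulVec_eq_smul G.one_vecMul_lapMatrix hLY h0 hmn hx
    simpa [hs] using hneg _ (hcenter w z hx)

theorem stmt12_general (m n : ℕ) (hm : 3 ≤ m) (hn : 1 ≤ n)
    (G : SimpleGraph (Fin m)) [DecidableRel G.Adj]
    (LY : Matrix (Fin n) (Fin n) ℝ)
    (hLYsymm : LY.IsSymm) (hLYrow : ∀ i, ∑ j, LY i j = 0)
    (u v : Fin m) :
    StronglyCospectral (joinL m n (G.lapMatrix ℝ) LY) (Sum.inl u) (Sum.inl v) ↔
      StronglyCospectral (G.lapMatrix ℝ) u v := by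
  have hLY : 1 ᵥ* LY = 0 := by
    rw [← mulVec_transpose, hLYsymm.eq]
    ext i
    simp [mulVec, dotProduct, hLYrow]
  exact ⟨stronglyCospectral_lapMatrix_of_joinL hm G LY,
    stronglyCospectral_joinL_of_lapMatrix hm hn G hLY⟩

theorem stmt12 (m n : ℕ) (hm : 3 ≤ m) (hn : 1 ≤ n)
    (G : SimpleGraph (Fin m)) [DecidableRel G.Adj]
    (LY : Matrix (Fin n) (Fin n) ℝ)
    (hLYsymm : LY.IsSymm) (hLYrow : ∀ i, ∑ j, LY i j = 0)
    (hLYoffdiag : ∀ i j, i ≠ j → LY i j ≤ 0)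
    (u v : Fin m) (huv : u ≠ v) :
    StronglyCospectral (joinL m n (G.lapMatrix ℝ) LY) (Sum.inl u) (Sum.inl v) ↔
      StronglyCospectral (G.lapMatrix ℝ) u v :=
  stmt12_general m n hm hn G LY hLYsymm hLYrow u v
end

section
/- Let m ≥ 2 and suppose the characteristic polynomial of L_X has integer coefficients. If m + n is odd, then no perfect state transfer occurs in X∨Y between vertices of X: for all distinct u, v ∈ {1,…,m} and all τ ∈ ℝ, |exp(iτL)_{u,v}| ≠ 1. -/
open Matrix Complex

/-!
Write `U = exp(iτL)` and suppose `|U_{uv}| = 1`. Since `U` is unitary, symmetric and fixes the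
all-ones vector, it swaps `e_u` and `e_v`, so `e_u - e_v` is a `(-1)`-eigenvector of `U`;
evaluating `U` at `u` on the eigenvector `(n, …, n, -m, …, -m)` of `L` (eigenvalue `m + n`)
gives `e^{iτ(m+n)} = 1`. Expanding `e_u - e_v` in an eigenbasis of `L` yields an eigenvalue `θ`
with `e^{iτθ} = -1` whose eigenvector `w` has `w_u ≠ w_v`; the centred restriction of `w` to `X`
is an eigenvector of `L_X` for `θ - n`. The two exponential relations make `θ` rational, and
`θ - n` is a root of the monic integer characteristic polynomial of `L_X`, so `θ` is an integer.
But then `e^{iτθ(m+n)}` is both `(-1)^{m+n} = -1` and `1`.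
-/

namespace Matrix.IsHermitian

variable {N : Type*} [Fintype N] [DecidableEq N] {H : Matrix N N ℂ} (hH : H.IsHermitian)

local notation "W" => (hH.eigenvectorUnitary : Matrix N N ℂ)
local notation "D" => diagonal (fun j => (hH.eigenvalues j : ℂ))

include hH

lemma eq_eigenvectorUnitary_mul_diagonal : H = W * D * star W := by
  simpa [Unitary.conjStarAlgAut_apply, Function.comp_def] using hH.spectral_theorem

lemma star_eigenvectorUnitary_mul_eq_diagonal_mul : star W * H = D * star W := by
  calc star W * H = star W * (W * D * star W) :=
        congrArg (star W * ·) hH.eq_eigenvectorUnitary_mul_diagonal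
    _ = D * star W := by simp [← Matrix.mul_assoc]

lemma exp_smul_eq_eigenvectorUnitary_mul_diagonal (c : ℂ) :
    NormedSpace.exp (c • H)
      = W * diagonal (fun j => cexp (c * hH.eigenvalues j)) * star W := by
  have hW : IsUnit W := (Unitary.toUnits hH.eigenvectorUnitary).isUnit
  calc NormedSpace.exp (c • H) = NormedSpace.exp (W * (c • D) * W⁻¹) := by
        rw [Matrix.inv_eq_left_inv (Unitary.coe_star_mul_self _), Matrix.mul_smul, Matrix.smul_mul,
          ← hH.eq_eigenvectorUnitary_mul_diagonal]
    _ = _ := by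
        rw [Matrix.exp_conj _ _ hW, ← Matrix.diagonal_smul, Matrix.exp_diagonal,
          Matrix.inv_eq_left_inv (Unitary.coe_star_mul_self _)]
        congr 3
        ext j
        simp [← Complex.exp_eq_exp_ℂ]

lemma exp_smul_mulVec_of_mulVec_eq_smul (c : ℂ) {x : N → ℂ} {θ : ℝ}
    (hx : H *ᵥ x = (θ : ℂ) • x) :
    NormedSpace.exp (c • H) *ᵥ x = cexp (c * θ) • x := by
  set y := star W *ᵥ x
  have hy : diagonal (fun j => (hH.eigenvalues j : ℂ)) *ᵥ y = (θ : ℂ) • y := by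
    rw [mulVec_mulVec, ← hH.star_eigenvectorUnitary_mul_eq_diagonal_mul, ← mulVec_mulVec, hx,
      mulVec_smul]
  have hdiag : diagonal (fun j => cexp (c * hH.eigenvalues j)) *ᵥ y
      = cexp (c * θ) • y := by
    funext j
    have hj := congrFun hy j
    simp only [mulVec_diagonal, Pi.smul_apply, smul_eq_mul] at hj ⊢
    rcases eq_or_ne (y j) 0 with h0 | h0
    · simp [h0]
    · rw [mul_right_cancel₀ h0 hj]
  rw [hH.exp_smul_eq_eigenvectorUnitary_mul_diagonal, ← mulVec_mulVec, ← mulVec_mulVec, hdiag,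
    mulVec_smul, mulVec_mulVec, Unitary.mul_star_self_of_mem hH.eigenvectorUnitary.2, one_mulVec]

lemma exists_eigenvector_of_exp_smul_mulVec_eq_smul (c μ : ℂ) {x : N → ℂ} (hx0 : x ≠ 0)
    (hx : NormedSpace.exp (c • H) *ᵥ x = μ • x) :
    ∃ (θ : ℝ) (w : N → ℂ), H *ᵥ w = (θ : ℂ) • w ∧ star w ⬝ᵥ x ≠ 0 ∧
      cexp (c * θ) = μ := by
  set y := star W *ᵥ x
  obtain ⟨j, hj⟩ : ∃ j, y j ≠ 0 := by
    by_contra! h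
    apply hx0
    rw [← one_mulVec x, ← Unitary.mul_star_self_of_mem hH.eigenvectorUnitary.2,
      ← mulVec_mulVec, show star W *ᵥ x = 0 from funext h, mulVec_zero]
  have hstar : star W * NormedSpace.exp (c • H)
      = diagonal (fun j => cexp (c * hH.eigenvalues j)) * star W := by
    rw [hH.exp_smul_eq_eigenvectorUnitary_mul_diagonal, ← Matrix.mul_assoc, ← Matrix.mul_assoc,
      Unitary.star_mul_self_of_mem hH.eigenvectorUnitary.2, Matrix.one_mul]
  have hy : diagonal (fun j => cexp (c * hH.eigenvalues j)) *ᵥ y = μ • y := by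
    rw [mulVec_mulVec, ← hstar, ← mulVec_mulVec, hx, mulVec_smul]
  have hμ := congrFun hy j
  simp only [mulVec_diagonal, Pi.smul_apply, smul_eq_mul] at hμ
  refine ⟨hH.eigenvalues j, hH.eigenvectorBasis j, ?_, ?_, mul_right_cancel₀ hj hμ⟩
  · ext k
    simp [hH.mulVec_eigenvectorBasis j]
  · convert hj using 1
    simp [y, mulVec, dotProduct, star_apply]

lemma exp_I_mul_smul_mem_unitaryGroup (t : ℝ) :
    NormedSpace.exp ((I * t) • H) ∈ unitaryGroup N ℂ := by
  have hstar : star ((I * t) • H) = -((I * t) • H) := by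
    rw [star_smul, star_eq_conjTranspose, hH.eq, ← neg_smul]
    simp [Complex.conj_ofReal]
  rw [mem_unitaryGroup_iff', star_eq_conjTranspose, ← exp_conjTranspose,
    ← star_eq_conjTranspose, hstar, exp_neg]
  exact nonsing_inv_mul _ ((isUnit_iff_isUnit_det _).mp (isUnit_exp _))

end Matrix.IsHermitian

namespace Matrix

variable {𝕜 : Type*} [RCLike 𝕜] {N : Type*} [Fintype N] [DecidableEq N] {U : Matrix N N 𝕜}

lemma sum_norm_sq_apply_eq_one (hU : U ∈ unitaryGroup N 𝕜) (i : N) :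
    ∑ k, ‖U i k‖ ^ 2 = 1 := by
  have h : (U * star U) i i = (1 : Matrix N N 𝕜) i i := by rw [Unitary.mul_star_self_of_mem hU]
  simp only [mul_apply, star_apply, RCLike.star_def, RCLike.mul_conj, one_apply_eq] at h
  exact_mod_cast h

lemma apply_eq_zero_of_norm_apply_eq_one (hU : U ∈ unitaryGroup N 𝕜) {i j k : N}
    (h : ‖U i j‖ = 1) (hk : k ≠ j) : U i k = 0 := by
  have hsum := sum_norm_sq_apply_eq_one hU i
  rw [← Finset.add_sum_erase _ _ (Finset.mem_univ j), h, one_pow, add_eq_left,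
    Finset.sum_eq_zero_iff_of_nonneg fun _ _ => by positivity] at hsum
  simpa using hsum k (Finset.mem_erase.mpr ⟨hk, Finset.mem_univ k⟩)

lemma row_eq_single_of_norm_apply_eq_one (hU : U ∈ unitaryGroup N 𝕜) (h1 : U *ᵥ 1 = 1)
    {i j : N} (h : ‖U i j‖ = 1) : U i = Pi.single j 1 := by
  have hzero : ∀ k, k ≠ j → U i k = 0 := fun _ => apply_eq_zero_of_norm_apply_eq_one hU h
  have hij : U i j = 1 := by
    have hrow := congrFun h1 i
    simp only [mulVec, dotProduct, Pi.one_apply, mul_one] at hrow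
    rwa [Finset.sum_eq_single j (fun k _ hk => hzero k hk) (by simp)] at hrow
  funext k
  rcases eq_or_ne k j with rfl | hk
  · simp [hij]
  · simp [hzero k hk, hk]

end Matrix

lemma Matrix.IsSymm.isHermitian_map_ofReal {N : Type*} {M : Matrix N N ℝ} (hM : M.IsSymm) :
    (M.map ((↑) : ℝ → ℂ)).IsHermitian :=
  (isHermitian_iff_isSymm.mpr hM).map _ fun x => by simp

section transU

variable {N : Type*} [Fintype N] [DecidableEq N] {M : Matrix N N ℝ}

lemma transU_mem_unitaryGroup (hM : M.IsSymm) (τ : ℝ) : transU M τ ∈ unitaryGroup N ℂ :=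
  hM.isHermitian_map_ofReal.exp_I_mul_smul_mem_unitaryGroup τ

lemma transU_isSymm (hM : M.IsSymm) (τ : ℝ) : (transU M τ).IsSymm :=
  ((hM.map _).smul _).exp

lemma transU_mulVec_ofReal_of_mulVec_eq_smul (hM : M.IsSymm) (τ : ℝ) {x : N → ℝ} {θ : ℝ}
    (hx : M *ᵥ x = θ • x) :
    transU M τ *ᵥ (fun i => (x i : ℂ)) = cexp (I * τ * θ) • fun i => (x i : ℂ) := by
  refine hM.isHermitian_map_ofReal.exp_smul_mulVec_of_mulVec_eq_smul _ (funext fun i => ?_)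
  convert (RingHom.map_mulVec Complex.ofRealHom M x i).symm using 1
  · rfl
  · simp [hx]

variable (hM : M.IsSymm) (h1 : M *ᵥ 1 = 0) {τ : ℝ} {u v : N} (h : ‖transU M τ u v‖ = 1)
include hM h1 h

lemma transU_row_eq_single_of_norm_eq_one : transU M τ u = Pi.single v 1 := by
  refine Matrix.row_eq_single_of_norm_apply_eq_one (transU_mem_unitaryGroup hM τ) ?_ h
  simpa [← Pi.one_def] using
    transU_mulVec_ofReal_of_mulVec_eq_smul hM τ (x := 1) (θ := 0) (by simp [h1])

lemma cexp_eq_one_of_norm_transU_eq_one {x : N → ℝ} {θ : ℝ} (hx : M *ᵥ x = θ • x)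
    (hxuv : x u = x v) (hxv : x v ≠ 0) : cexp (I * τ * θ) = 1 := by
  have hu := congrFun (transU_mulVec_ofReal_of_mulVec_eq_smul hM τ hx) u
  rw [mulVec, transU_row_eq_single_of_norm_eq_one hM h1 h, single_one_dotProduct, Pi.smul_apply,
    smul_eq_mul, hxuv] at hu
  exact (mul_eq_right₀ (by exact_mod_cast hxv)).mp hu.symm

lemma transU_mulVec_single_sub_single :
    transU M τ *ᵥ (Pi.single u 1 - Pi.single v 1)
      = (-1 : ℂ) • (Pi.single u 1 - Pi.single v 1) := by
  have hvu : ‖transU M τ v u‖ = 1 := by rwa [(transU_isSymm hM τ).apply]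
  have hcol : ∀ i, transU M τ *ᵥ Pi.single i 1 = transU M τ i := fun i => by
    rw [mulVec_single_one]
    exact funext fun j => (transU_isSymm hM τ).apply i j
  rw [mulVec_sub, hcol, hcol, transU_row_eq_single_of_norm_eq_one hM h1 h,
    transU_row_eq_single_of_norm_eq_one hM h1 hvu, neg_one_smul, neg_sub]

end transU

lemma Matrix.isRoot_charpoly_of_mulVec_eq_smul {K ι : Type*} [Field K] [Fintype ι]
    [DecidableEq ι] {P : Matrix ι ι K} {y : ι → K} {μ : K} (hy0 : y ≠ 0)
    (hy : P *ᵥ y = μ • y) : P.charpoly.IsRoot μ := by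
  rw [Polynomial.IsRoot, eval_charpoly, ← exists_mulVec_eq_zero_iff]
  exact ⟨y, hy0, by ext; simp [sub_mulVec, hy]⟩

lemma exists_mulVec_eq_smul_of_fromBlocks_mulVec_eq_smul {K ι κ : Type*} [Field K] [CharZero K]
    [Fintype ι] [Fintype κ] [DecidableEq ι] {P : Matrix ι ι K} (hrow : P *ᵥ 1 = 0)
    (hcol : 1 ᵥ* P = 0) {a θ : K} {C : Matrix κ ι K} {D : Matrix κ κ K} {w : ι ⊕ κ → K}
    (hw : fromBlocks (P + a • 1) (-of fun _ _ => 1) C D *ᵥ w = θ • w) {u v : ι}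
    (huv : w (.inl u) ≠ w (.inl v)) :
    ∃ y ≠ 0, P *ᵥ y = (θ - a) • y := by
  set x := w ∘ Sum.inl
  set t := ∑ k, w (.inr k)
  have htop : ∀ i, (P *ᵥ x) i + a * x i - t = θ * x i := fun i => by
    simpa [mulVec, dotProduct, add_mul, Finset.sum_add_distrib, one_apply, sub_eq_add_neg, x, t]
      using congrFun hw (.inl i)
  have hx : P *ᵥ x = (θ - a) • x + t • 1 := funext fun i => by
    simp only [Pi.add_apply, Pi.smul_apply, smul_eq_mul, Pi.one_apply, mul_one]
    linear_combination htop i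
  have hsum : (θ - a) * (1 ⬝ᵥ x) + t * Fintype.card ι = 0 := by
    have := congrArg ((1 : ι → K) ⬝ᵥ ·) hx
    simp only [dotProduct_mulVec, hcol, zero_dotProduct, dotProduct_add, dotProduct_smul,
      one_dotProduct_one, smul_eq_mul] at this
    linear_combination -this
  refine ⟨(Fintype.card ι : K) • x - (1 ⬝ᵥ x) • 1, fun h0 => huv ?_, ?_⟩
  · have : Nonempty ι := ⟨u⟩
    have hc : (Fintype.card ι : K) ≠ 0 := Nat.cast_ne_zero.mpr Fintype.card_ne_zero
    have hu := congrFun h0 u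
    have hv := congrFun h0 v
    simp only [Pi.sub_apply, Pi.smul_apply, smul_eq_mul, Pi.one_apply, mul_one, Pi.zero_apply,
      x, Function.comp_apply] at hu hv
    exact mul_left_cancel₀ hc (by linear_combination hu - hv)
  · rw [mulVec_sub, mulVec_smul, mulVec_smul, hrow, hx]
    ext i
    simp only [smul_add, smul_zero, Pi.sub_apply, Pi.add_apply, Pi.smul_apply, smul_eq_mul,
      Pi.one_apply, mul_one, Pi.zero_apply, sub_zero]
    linear_combination hsum

section join

variable {m n : ℕ} {LX : Matrix (Fin m) (Fin m) ℝ} {LY : Matrix (Fin n) (Fin n) ℝ}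

lemma joinL_isSymm (hLX : LX.IsSymm) (hLY : LY.IsSymm) : (joinL m n LX LY).IsSymm :=
  IsSymm.fromBlocks (hLX.add (isSymm_one.smul _)) (by ext; simp) (hLY.add (isSymm_one.smul _))

lemma joinL_mulVec_one (hLX : ∀ i, ∑ j, LX i j = 0) (hLY : ∀ i, ∑ j, LY i j = 0) :
    joinL m n LX LY *ᵥ 1 = 0 := by
  ext (i | i) <;>
    simp [joinL, mulVec, dotProduct, Finset.sum_add_distrib, one_apply, hLX, hLY]

lemma joinL_mulVec_sumElim (hLX : ∀ i, ∑ j, LX i j = 0) (hLY : ∀ i, ∑ j, LY i j = 0) :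
    joinL m n LX LY *ᵥ Sum.elim (fun _ => (n : ℝ)) (fun _ => -(m : ℝ))
      = ((m + n : ℕ) : ℝ) • Sum.elim (fun _ => (n : ℝ)) (fun _ => -(m : ℝ)) := by
  ext (i | i) <;>
    simp [joinL, mulVec, dotProduct, Finset.sum_add_distrib, one_apply, ← Finset.sum_mul, hLX,
      hLY] <;> ring

lemma isRoot_charpoly_of_joinL_map_mulVec_eq_smul (hLXsymm : LX.IsSymm)
    (hLX : ∀ i, ∑ j, LX i j = 0) {w : Fin m ⊕ Fin n → ℂ} {θ : ℝ}
    (hw : (joinL m n LX LY).map ((↑) : ℝ → ℂ) *ᵥ w = (θ : ℂ) • w) {u v : Fin m}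
    (huv : w (.inl u) ≠ w (.inl v)) : LX.charpoly.IsRoot (θ - n) := by
  have hrow : LX.map ((↑) : ℝ → ℂ) *ᵥ 1 = 0 := funext fun i => by
    simpa [mulVec, dotProduct] using congrArg ((↑) : ℝ → ℂ) (hLX i)
  have hcol : 1 ᵥ* LX.map ((↑) : ℝ → ℂ) = 0 := by
    rw [← mulVec_transpose, ← transpose_map, hLXsymm.eq, hrow]
  have hblocks : (joinL m n LX LY).map ((↑) : ℝ → ℂ) = fromBlocks
      (LX.map ((↑) : ℝ → ℂ) + (n : ℂ) • 1) (-of fun _ _ => 1) (-of fun _ _ => 1)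
      (LY.map ((↑) : ℝ → ℂ) + (m : ℂ) • 1) := by
    ext (i | i) (j | j) <;> simp [joinL, one_apply, apply_ite ((↑) : ℝ → ℂ)]
  rw [hblocks] at hw
  obtain ⟨y, hy0, hy⟩ := exists_mulVec_eq_smul_of_fromBlocks_mulVec_eq_smul hrow hcol hw huv
  have hroot := isRoot_charpoly_of_mulVec_eq_smul hy0 hy
  rw [show LX.map ((↑) : ℝ → ℂ) = LX.map ofRealHom from rfl, charpoly_map] at hroot
  refine (Polynomial.isRoot_map_iff (f := Complex.ofRealHom) Complex.ofReal_injective).mp ?_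
  convert hroot using 1
  simp

end join

open Polynomial in
lemma exists_int_eq_of_isRoot_of_coeff_int {K : Type*} [Field K] [CharZero K] {p : K[X]}
    (hp : p.Monic) (hint : ∀ i, ∃ z : ℤ, p.coeff i = z) {r : ℚ} (hr : p.IsRoot r) :
    ∃ z : ℤ, r = z := by
  obtain ⟨q, hqp, -, hq⟩ := lifts_and_natDegree_eq_and_monic
    ((lifts_iff_coeff_lifts p).mpr fun i => by
      obtain ⟨z, hz⟩ := hint i
      exact ⟨z, by simp [hz]⟩) hp
  have hqr : aeval r q = 0 := by
    apply (algebraMap ℚ K).injective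
    rw [← aeval_algebraMap_apply, map_zero, aeval_def, ← eval_map, algebraMap_int_eq, hqp]
    simpa using hr
  obtain ⟨z, hz⟩ := isInteger_of_is_root_of_monic hq hqr
  exact ⟨z, by simp [← hz]⟩

lemma Complex.exists_rat_eq_mul_of_exp {τ θ N : ℝ} (hN : N ≠ 0)
    (h1 : cexp (I * τ * N) = 1) (h2 : cexp (I * τ * θ) = -1) :
    ∃ q : ℚ, θ = q * N := by
  obtain ⟨l, hl⟩ := exp_eq_one_iff.mp h1
  obtain ⟨k, hk⟩ := exp_eq_one_iff.mp (show cexp (2 * (I * τ * θ)) = 1 by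
    rw [two_mul, exp_add, h2]; norm_num)
  have hl' : τ * N = l * (2 * Real.pi) := by simpa using congrArg Complex.im hl
  have hk' : τ * θ = k * Real.pi := by
    have : 2 * (τ * θ) = k * (2 * Real.pi) := by simpa using congrArg Complex.im hk
    linarith
  have hτ : τ ≠ 0 := by
    rintro rfl
    norm_num at h2
  have hl0 : (l : ℝ) ≠ 0 := by
    rintro h0
    rw [h0, zero_mul] at hl'
    exact hN ((mul_eq_zero.mp hl').resolve_left hτ)
  refine ⟨k / (2 * l), ?_⟩
  push_cast
  field_simp
  exact mul_right_cancel₀ Real.pi_ne_zero (by linear_combination N * hk' - θ * hl')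

lemma Complex.exp_mul_intCast_ne_neg_one (x : ℂ) {N : ℕ} (hN : Odd N) (h : cexp (x * N) = 1)
    (k : ℤ) : cexp (x * k) ≠ -1 := by
  intro hk
  have : cexp (x * k) ^ N = cexp (x * N) ^ k := by
    rw [← exp_nat_mul, ← exp_int_mul]
    ring_nf
  rw [hk, h, hN.neg_one_pow, _root_.one_zpow] at this
  norm_num at this

theorem stmt13_general (m n : ℕ) (hn : 1 ≤ n)
    (LX : Matrix (Fin m) (Fin m) ℝ) (LY : Matrix (Fin n) (Fin n) ℝ)
    (hLXsymm : LX.IsSymm) (hLXrow : ∀ i, ∑ j, LX i j = 0)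
    (hLYsymm : LY.IsSymm) (hLYrow : ∀ i, ∑ j, LY i j = 0)
    (hLXcharpoly : ∀ i, ∃ z : ℤ, (Matrix.charpoly LX).coeff i = (z : ℝ))
    (hodd : Odd (m + n)) :
    ∀ (u v : Fin m), u ≠ v → ∀ τ : ℝ,
      ‖transU (joinL m n LX LY) τ (Sum.inl u) (Sum.inl v)‖ ≠ 1 := by
  intro u v huv τ hPST
  have hA := joinL_isSymm hLXsymm hLYsymm
  have h1 := joinL_mulVec_one hLXrow hLYrow
  have hN : cexp (I * τ * ((m + n : ℕ) : ℝ)) = 1 :=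
    cexp_eq_one_of_norm_transU_eq_one hA h1 hPST (joinL_mulVec_sumElim hLXrow hLYrow) rfl
      (show (n : ℝ) ≠ 0 by positivity)
  have hx0 : (Pi.single (.inl u) 1 - Pi.single (.inl v) 1 : Fin m ⊕ Fin n → ℂ) ≠ 0 :=
    fun h => by simpa [huv] using congrFun h (.inl u)
  obtain ⟨θ, w, hw, hwuv, hθ⟩ :=
    hA.isHermitian_map_ofReal.exists_eigenvector_of_exp_smul_mulVec_eq_smul (I * τ) (-1) hx0
      (transU_mulVec_single_sub_single hA h1 hPST)
  have hroot := isRoot_charpoly_of_joinL_map_mulVec_eq_smul hLXsymm hLXrow hw (u := u) (v := v)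
    fun h => hwuv (by simp [h, dotProduct_sub])
  obtain ⟨q, hq⟩ := Complex.exists_rat_eq_mul_of_exp (by positivity) hN hθ
  obtain ⟨d, hd⟩ := exists_int_eq_of_isRoot_of_coeff_int LX.charpoly_monic hLXcharpoly
    (r := q * (m + n : ℕ) - n) (by push_cast at hq ⊢; rwa [← hq])
  have hθd : θ = d + n := by
    have := congrArg ((↑) : ℚ → ℝ) hd
    push_cast at this hq
    linarith
  refine Complex.exp_mul_intCast_ne_neg_one (I * τ) hodd (by exact_mod_cast hN) (d + n) ?_
  rw [← hθ, hθd]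
  push_cast
  rfl

theorem stmt13 (m n : ℕ) (hm : 2 ≤ m) (hn : 1 ≤ n)
    (LX : Matrix (Fin m) (Fin m) ℝ) (LY : Matrix (Fin n) (Fin n) ℝ)
    (hLXsymm : LX.IsSymm) (hLXrow : ∀ i, ∑ j, LX i j = 0)
    (hLXoffdiag : ∀ i j, i ≠ j → LX i j ≤ 0)
    (hLYsymm : LY.IsSymm) (hLYrow : ∀ i, ∑ j, LY i j = 0)
    (hLYoffdiag : ∀ i j, i ≠ j → LY i j ≤ 0)
    (hLXcharpoly : ∀ i, ∃ z : ℤ, (Matrix.charpoly LX).coeff i = (z : ℝ))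
    (hodd : Odd (m + n)) :
    ∀ (u v : Fin m), u ≠ v → ∀ τ : ℝ,
      ‖transU (joinL m n LX LY) τ (Sum.inl u) (Sum.inl v)‖ ≠ 1 :=
  stmt13_general m n hn LX LY hLXsymm hLXrow hLYsymm hLYrow hLXcharpoly hodd
end

section
/- For all u, v ∈ {1,…,m} and all t ∈ ℝ, the absolute difference of moduli satisfies | |U_L(X∨Y,t)_{u,v}| − |U_L(X,t)_{u,v}| | ≤ 2/m. -/
open Matrix Complex

/-!
On three families of vectors of `X ∨ Y` the join Laplacian `L` acts through a known matrix: it kills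
the all-ones vector, multiplies `n·1_X - m·1_Y` by `m + n`, and acts on the vectors `x ⊕ 0` with
`∑ x = 0` as `L_X + n`. Such intertwinings pass from `L` to `exp(itL)`, so the decomposition
`e_v ⊕ 0 = (e_v - 1/m) ⊕ 0 + 1/(m+n) · 1 + 1/(m(m+n)) · (n·1_X - m·1_Y)` gives
`U_L(X∨Y,t)_{uv} = e^{itn} (U_L(X,t)_{uv} - 1/m) + 1/(m+n) + n e^{it(m+n)} / (m(m+n))`.
Hence `U_L(X∨Y,t)_{uv}` differs from `e^{itn} U_L(X,t)_{uv}` by at most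
`1/m + 1/(m+n) + n/(m(m+n)) = 2/m`.
-/

namespace Matrix

variable {𝕂 : Type*} [RCLike 𝕂] {a b : Type*} [Fintype a] [DecidableEq a] [Fintype b]
  [DecidableEq b]

open scoped Norms.Operator in
theorem exp_mul_eq_mul_exp_of_mul_eq_mul {M : Matrix a a 𝕂} {N : Matrix b b 𝕂}
    {R : Matrix a b 𝕂} (h : M * R = R * N) :
    NormedSpace.exp M * R = R * NormedSpace.exp N := by
  have hpow : ∀ k : ℕ, M ^ k * R = R * N ^ k := fun k => by
    induction k with
    | zero => simp
    | succ k ih =>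
      rw [pow_succ, Matrix.mul_assoc, h, ← Matrix.mul_assoc, ih, Matrix.mul_assoc, ← pow_succ]
  have hM := (NormedSpace.exp_series_hasSum_exp' (𝕂 := 𝕂) M).map
    (mulRightLinearMap a 𝕂 R) (continuous_id.matrix_mul continuous_const)
  have hN := (NormedSpace.exp_series_hasSum_exp' (𝕂 := 𝕂) N).map
    (mulLeftLinearMap b 𝕂 R) (continuous_const.matrix_mul continuous_id)
  refine hM.unique ?_
  convert hN using 1
  · funext k
    simp [hpow]
  -- the two sides differ only in the normed-ring instance through which `exp N` was reached
  · exact rfl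

end Matrix

section transU

variable {a b : Type*} [Fintype a] [DecidableEq a] [Fintype b] [DecidableEq b]

theorem transU_mul_eq_mul_transU {M : Matrix a a ℝ} {N : Matrix b b ℝ} {R : Matrix a b ℝ}
    (h : M * R = R * N) (t : ℝ) :
    transU M t * R.map ofReal = R.map ofReal * transU N t := by
  refine Matrix.exp_mul_eq_mul_exp_of_mul_eq_mul ?_
  have hc : (M * R).map ofRealHom = (R * N).map ofRealHom := congrArg (Matrix.map · ofRealHom) h
  rw [Matrix.map_mul, Matrix.map_mul] at hc
  rw [Matrix.smul_mul, Matrix.mul_smul]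
  exact congrArg _ hc

theorem transU_add_smul_one (M : Matrix a a ℝ) (c t : ℝ) :
    transU (M + c • 1) t = cexp (I * t * c) • transU M t := by
  have hmap : (M + c • 1).map ofReal = M.map ofReal + (c : ℂ) • 1 := by
    ext i j
    by_cases hij : i = j <;> simp [hij]
  have hscalar : NormedSpace.exp ((I * t * c) • (1 : Matrix a a ℂ)) = cexp (I * t * c) • 1 := by
    rw [smul_one_eq_diagonal, exp_diagonal, Pi.exp_def, exp_eq_exp_ℂ, ← smul_one_eq_diagonal]
  rw [transU, transU, hmap, smul_add, smul_smul,
    Matrix.exp_add_of_commute _ _ ((Commute.one_right _).smul_right _), hscalar,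
    Matrix.mul_smul, Matrix.mul_one]

theorem transU_zero (t : ℝ) : transU (0 : Matrix a a ℝ) t = 1 := by
  simp [transU]

theorem transU_smul_one (c t : ℝ) : transU (c • 1 : Matrix a a ℝ) t = cexp (I * t * c) • 1 := by
  simpa [transU_zero] using transU_add_smul_one (0 : Matrix a a ℝ) c t

end transU

local notation "𝐉" => Matrix.of fun _ _ => (1 : ℝ)

section ones

variable {p q r : Type*} [Fintype q]

theorem ones_mul_ones : (𝐉 : Matrix p q ℝ) * (𝐉 : Matrix q r ℝ) = (Fintype.card q : ℝ) • 𝐉 := by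
  ext i j
  simp [Matrix.mul_apply]

theorem mul_ones_eq_zero {M : Matrix p q ℝ} (h : ∀ i, ∑ j, M i j = 0) :
    M * (𝐉 : Matrix q r ℝ) = 0 := by
  ext i j
  simp [Matrix.mul_apply, h]

theorem ones_mul_eq_zero {M : Matrix q q ℝ} (hs : M.IsSymm) (h : ∀ i, ∑ j, M i j = 0) :
    (𝐉 : Matrix p q ℝ) * M = 0 := by
  ext i j
  simp [Matrix.mul_apply, hs.apply, h]

theorem sum_transU_apply_eq_one [DecidableEq q] {M : Matrix q q ℝ} (hs : M.IsSymm)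
    (h : ∀ i, ∑ j, M i j = 0) (t : ℝ) (j : q) : ∑ i, transU M t i j = 1 := by
  have hJ : (0 : Matrix q q ℝ) * 𝐉 = 𝐉 * M := by rw [Matrix.zero_mul, ones_mul_eq_zero hs h]
  have := congrFun (congrFun (transU_mul_eq_mul_transU hJ t) j) j
  simpa [transU_zero, Matrix.mul_apply, Matrix.one_apply] using this.symm

end ones

section join

variable (m n : ℕ)

noncomputable def onesCols : Matrix (Fin m ⊕ Fin n) (Fin m) ℝ := fromRows 𝐉 𝐉

noncomputable def splitCols : Matrix (Fin m ⊕ Fin n) (Fin m) ℝ :=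
  fromRows ((n : ℝ) • 𝐉) (-((m : ℝ) • 𝐉))

noncomputable def centeringCols : Matrix (Fin m ⊕ Fin n) (Fin m) ℝ :=
  fromRows (1 - (m : ℝ)⁻¹ • 𝐉) 0

variable {m n} {LX : Matrix (Fin m) (Fin m) ℝ} {LY : Matrix (Fin n) (Fin n) ℝ}

theorem joinL_mul_onesCols (hLXrow : ∀ i, ∑ j, LX i j = 0) (hLYrow : ∀ i, ∑ j, LY i j = 0) :
    joinL m n LX LY * onesCols m n = onesCols m n * (0 : Matrix (Fin m) (Fin m) ℝ) := by
  rw [joinL, onesCols, fromBlocks_mul_fromRows, Matrix.mul_zero, ← fromRows_zero]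
  simp only [Matrix.add_mul, Matrix.smul_mul, Matrix.one_mul, Matrix.neg_mul, ones_mul_ones,
    mul_ones_eq_zero hLXrow, mul_ones_eq_zero hLYrow, Fintype.card_fin]
  simp

theorem joinL_mul_splitCols (hLXrow : ∀ i, ∑ j, LX i j = 0) (hLYrow : ∀ i, ∑ j, LY i j = 0) :
    joinL m n LX LY * splitCols m n =
      splitCols m n * ((m + n : ℝ) • (1 : Matrix (Fin m) (Fin m) ℝ)) := by
  rw [joinL, splitCols, fromBlocks_mul_fromRows, fromRows_mul]
  simp only [Matrix.add_mul, Matrix.smul_mul, Matrix.mul_smul, Matrix.one_mul, Matrix.mul_one,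
    Matrix.neg_mul, Matrix.mul_neg, ones_mul_ones, mul_ones_eq_zero hLXrow,
    mul_ones_eq_zero hLYrow, Fintype.card_fin]
  congr 1 <;> module

theorem joinL_mul_centeringCols (hLXsymm : LX.IsSymm) (hLXrow : ∀ i, ∑ j, LX i j = 0) :
    joinL m n LX LY * centeringCols m n = centeringCols m n * (LX + (n : ℝ) • 1) := by
  rcases Nat.eq_zero_or_pos m with rfl | hm
  · exact Subsingleton.elim _ _
  rw [joinL, centeringCols, fromBlocks_mul_fromRows, fromRows_mul]
  simp only [Matrix.add_mul, Matrix.mul_add, Matrix.sub_mul, Matrix.mul_sub, Matrix.smul_mul,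
    Matrix.mul_smul, Matrix.one_mul, Matrix.mul_one, Matrix.neg_mul, ones_mul_ones,
    Matrix.mul_zero, Matrix.zero_mul, add_zero, mul_ones_eq_zero hLXrow,
    ones_mul_eq_zero hLXsymm hLXrow, Fintype.card_fin, smul_zero]
  have hm' : (m : ℝ) ≠ 0 := by positivity
  congr 1
  · module
  · rw [smul_neg, smul_smul, inv_mul_cancel₀ hm', one_smul, neg_sub_neg, sub_self]

theorem fromRows_one_zero_eq :
    (fromRows 1 0 : Matrix (Fin m ⊕ Fin n) (Fin m) ℝ) = centeringCols m n +
      (m + n : ℝ)⁻¹ • onesCols m n + ((m : ℝ) * (m + n))⁻¹ • splitCols m n := by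
  rcases Nat.eq_zero_or_pos m with rfl | hm
  · exact Subsingleton.elim _ _
  have hm' : (m : ℝ) ≠ 0 := by positivity
  have hmn : (m + n : ℝ) ≠ 0 := by positivity
  ext (i | i) j <;>
    simp only [centeringCols, onesCols, splitCols, fromRows_apply_inl, fromRows_apply_inr,
      Matrix.add_apply, Matrix.sub_apply, Matrix.smul_apply, Matrix.neg_apply, Matrix.zero_apply,
      Matrix.one_apply, of_apply, smul_eq_mul] <;>
    field_simp <;>
    ring

theorem transU_joinL_inl_inl (hLXsymm : LX.IsSymm) (hLXrow : ∀ i, ∑ j, LX i j = 0)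
    (hLYrow : ∀ i, ∑ j, LY i j = 0) (u v : Fin m) (t : ℝ) :
    transU (joinL m n LX LY) t (Sum.inl u) (Sum.inl v) =
      cexp (I * t * n) * (transU LX t u v - 1 / m) + 1 / (m + n) +
        n * cexp (I * t * (m + n)) / (m * (m + n)) := by
  have hcentering := transU_mul_eq_mul_transU (joinL_mul_centeringCols (LY := LY) hLXsymm hLXrow) t
  have hones := transU_mul_eq_mul_transU (joinL_mul_onesCols hLXrow hLYrow) t
  have hsplit := transU_mul_eq_mul_transU (joinL_mul_splitCols hLXrow hLYrow) t
  rw [transU_add_smul_one] at hcentering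
  rw [transU_zero, Matrix.mul_one] at hones
  rw [transU_smul_one, Matrix.mul_smul, Matrix.mul_one] at hsplit
  have hentry : transU (joinL m n LX LY) t (Sum.inl u) (Sum.inl v) =
      (transU (joinL m n LX LY) t * (fromRows 1 0 : Matrix (Fin m ⊕ Fin n) (Fin m) ℝ).map ofReal)
        (Sum.inl u) v := by
    simp [Matrix.mul_apply, Matrix.one_apply, apply_ite]
  have hdecomp : (fromRows 1 0 : Matrix (Fin m ⊕ Fin n) (Fin m) ℝ).map ofReal =
      (centeringCols m n).map ofReal + ((m + n : ℂ)⁻¹) • (onesCols m n).map ofReal +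
        ((m * (m + n) : ℂ)⁻¹) • (splitCols m n).map ofReal := by
    rw [fromRows_one_zero_eq]
    ext i j
    simp
  have hcentering_apply : ((centeringCols m n).map ofReal * transU LX t) (Sum.inl u) v =
      transU LX t u v - 1 / m := by
    have hcol := sum_transU_apply_eq_one hLXsymm hLXrow t v
    simp [centeringCols, Matrix.mul_apply, Matrix.one_apply, apply_ite, sub_mul,
      Finset.sum_sub_distrib, ← Finset.mul_sum, hcol]
  have hones_apply : (onesCols m n).map ofReal (Sum.inl u) v = 1 := by simp [onesCols]
  have hsplit_apply : (splitCols m n).map ofReal (Sum.inl u) v = n := by simp [splitCols]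
  rw [hentry, hdecomp, Matrix.mul_add, Matrix.mul_add, Matrix.mul_smul, Matrix.mul_smul,
    hcentering, hones, hsplit, Matrix.mul_smul]
  simp only [Matrix.add_apply, Matrix.smul_apply, smul_eq_mul, hcentering_apply, hones_apply,
    hsplit_apply]
  push_cast
  ring

end join

theorem norm_cexp_I_mul_ofReal_mul (t x : ℝ) : ‖cexp (I * t * x)‖ = 1 := by
  rw [show I * t * x = ((t * x : ℝ) : ℂ) * I by push_cast; ring]
  exact norm_exp_ofReal_mul_I _

theorem abs_norm_join_entry_sub_norm_le {m : ℕ} (n : ℕ) (hm : 0 < m) {e₁ e₂ : ℂ}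
    (he₁ : ‖e₁‖ = 1) (he₂ : ‖e₂‖ = 1) (z : ℂ) :
    |‖e₁ * (z - 1 / m) + 1 / (m + n) + n * e₂ / (m * (m + n))‖ - ‖z‖| ≤ 2 / m := by
  have hmn : ‖(m + n : ℂ)‖ = m + n := by exact_mod_cast Complex.norm_natCast (m + n)
  calc |‖e₁ * (z - 1 / m) + 1 / (m + n) + n * e₂ / (m * (m + n))‖ - ‖z‖|
      = |‖e₁ * (z - 1 / m) + 1 / (m + n) + n * e₂ / (m * (m + n))‖ - ‖e₁ * z‖| := by
        rw [norm_mul, he₁, one_mul]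
    _ ≤ ‖e₁ * (z - 1 / m) + 1 / (m + n) + n * e₂ / (m * (m + n)) - e₁ * z‖ :=
        abs_norm_sub_norm_le _ _
    _ = ‖1 / (m + n) - e₁ / m + n * e₂ / (m * (m + n))‖ := by
        ring_nf
    _ ≤ ‖(1 / (m + n) : ℂ)‖ + ‖e₁ / m‖ + ‖n * e₂ / (m * (m + n))‖ :=
        norm_add_le_of_le (norm_sub_le _ _) le_rfl
    _ = 1 / (m + n) + 1 / m + n / (m * (m + n)) := by
        simp [hmn, he₁, he₂]
    _ = 2 / m := by
        have : (0 : ℝ) < m := by exact_mod_cast hm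
        field_simp
        ring

theorem stmt18_general (m n : ℕ)
    (LX : Matrix (Fin m) (Fin m) ℝ) (LY : Matrix (Fin n) (Fin n) ℝ)
    (hLXsymm : LX.IsSymm) (hLXrow : ∀ i, ∑ j, LX i j = 0)
    (hLYrow : ∀ i, ∑ j, LY i j = 0) :
    ∀ (u v : Fin m) (t : ℝ),
      |‖transU (joinL m n LX LY) t (Sum.inl u) (Sum.inl v)‖
          - ‖transU LX t u v‖| ≤ 2 / m := by
  intro u v t
  rw [transU_joinL_inl_inl hLXsymm hLXrow hLYrow]
  exact abs_norm_join_entry_sub_norm_le n u.pos (norm_cexp_I_mul_ofReal_mul t n)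
    (by exact_mod_cast norm_cexp_I_mul_ofReal_mul t (m + n)) _

theorem stmt18 (m n : ℕ) (hm : 1 ≤ m) (hn : 1 ≤ n)
    (LX : Matrix (Fin m) (Fin m) ℝ) (LY : Matrix (Fin n) (Fin n) ℝ)
    (hLXsymm : LX.IsSymm) (hLXrow : ∀ i, ∑ j, LX i j = 0)
    (hLYsymm : LY.IsSymm) (hLYrow : ∀ i, ∑ j, LY i j = 0) :
    ∀ (u v : Fin m) (t : ℝ),
      |‖transU (joinL m n LX LY) t (Sum.inl u) (Sum.inl v)‖
          - ‖transU LX t u v‖| ≤ 2 / m :=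
  stmt18_general m n LX LY hLXsymm hLXrow hLYrow
end

section
/- For all u, v ∈ {1,…,m} and all t ∈ ℝ, |U_A(X∨Y,t)_{u,v} − U_A(X,t)_{u,v}| ≤ 2/m. Moreover, for τ ∈ ℝ, equality holds at t = τ if and only if e^{iτλ⁺} = e^{iτλ⁻} = −e^{iτk}, in which case U_A(X∨Y,τ)_{u,v} − U_A(X,τ)_{u,v} = −2e^{iτk}/m. -/
open Matrix Complex

/-!
Let `J` be the all-ones matrices and `E = diag(J/m, J/n)` the orthogonal projection onto the span
of the indicator vectors of `X` and `Y`. Regularity makes the adjacency matrix `A` of the join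
commute with `E`, and its compression `T = A E = [[k J/m, J], [J, ℓ J/n]]` satisfies
`T² = (λ⁺ + λ⁻) T - λ⁺ λ⁻ E`. Hence `T = λ⁺ P⁺ + λ⁻ P⁻` for orthogonal idempotents `P^±` summing to
`E`, all annihilated by the block-diagonal matrix `A - T`, and
`exp(itA) = exp(it(A - T)) - E + e^{itλ⁺} P⁺ + e^{itλ⁻} P⁻`.
The same splitting of `A_X` along `J/m` cancels `exp(it(A_X - kJ/m))` in the `X`-block, leaving
`U(X∨Y,t)_{uv} - U(X,t)_{uv} = (p e^{itλ⁺} + q e^{itλ⁻} - e^{itk}) / m` with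
`p = (k - λ⁻)/(λ⁺ - λ⁻) > 0`, `q = (λ⁺ - k)/(λ⁺ - λ⁻) > 0` and `p + q = 1`. The bound `2/m` and its
equality case then come from the strict convexity of the unit disc.
-/

section Idempotent

variable {R S : Type*} [Ring R] [CommSemiring S] [Algebra S R]

theorem add_smul_pow_succ_of_isIdempotentElem {a P : R} (hP : IsIdempotentElem P)
    (haP : a * P = 0) (hPa : P * a = 0) (z : S) (n : ℕ) :
    (a + z • P) ^ (n + 1) = a ^ (n + 1) + z ^ (n + 1) • P := by
  induction n with
  | zero => simp
  | succ n ih =>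
    have hanP : a ^ (n + 1) * P = 0 := by rw [pow_succ, mul_assoc, haP, mul_zero]
    rw [pow_succ, ih, pow_succ a (n + 1), pow_succ z (n + 1)]
    simp only [add_mul, mul_add, smul_mul_assoc, mul_smul_comm, hanP, hPa, hP.eq, smul_zero,
      smul_smul, add_zero, zero_add]
    rw [mul_comm z]

end Idempotent

section LagrangeProj

variable {K R : Type*} [Field K] [Ring R] [Algebra K R]

/-- The Lagrange interpolation polynomial `(X - μ₂)/(μ₁ - μ₂)` evaluated at `T` in the corner
algebra with unit `E`. -/
def lagrangeProj (E T : R) (μ₁ μ₂ : K) : R := (μ₁ - μ₂)⁻¹ • (T - μ₂ • E)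

variable {E T : R} {μ₁ μ₂ : K}

theorem lagrangeProj_add_lagrangeProj (hμ : μ₁ ≠ μ₂) :
    lagrangeProj E T μ₁ μ₂ + lagrangeProj E T μ₂ μ₁ = E := by
  have : μ₁ - μ₂ ≠ 0 := sub_ne_zero.mpr hμ
  have : μ₂ - μ₁ ≠ 0 := sub_ne_zero.mpr hμ.symm
  simp only [lagrangeProj, smul_sub, smul_smul]
  match_scalars <;> field_simp <;> ring

theorem smul_lagrangeProj_add_smul_lagrangeProj (hμ : μ₁ ≠ μ₂) :
    μ₁ • lagrangeProj E T μ₁ μ₂ + μ₂ • lagrangeProj E T μ₂ μ₁ = T := by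
  have : μ₁ - μ₂ ≠ 0 := sub_ne_zero.mpr hμ
  have : μ₂ - μ₁ ≠ 0 := sub_ne_zero.mpr hμ.symm
  simp only [lagrangeProj, smul_sub, smul_smul]
  match_scalars <;> field_simp <;> ring

theorem mul_lagrangeProj_eq_zero {a : R} (haE : a * E = 0) (haT : a * T = 0) :
    a * lagrangeProj E T μ₁ μ₂ = 0 := by
  simp [lagrangeProj, mul_sub, haE, haT]

theorem lagrangeProj_mul_eq_zero {a : R} (hEa : E * a = 0) (hTa : T * a = 0) :
    lagrangeProj E T μ₁ μ₂ * a = 0 := by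
  simp [lagrangeProj, sub_mul, hEa, hTa]

section Quadratic

variable (hE : IsIdempotentElem E) (hTE : T * E = T) (hET : E * T = T)
include hE hTE hET

theorem sub_smul_mul_sub_smul_eq_zero (hT : T * T = (μ₁ + μ₂) • T - (μ₁ * μ₂) • E) :
    (T - μ₁ • E) * (T - μ₂ • E) = 0 := by
  simp only [mul_sub, sub_mul, smul_mul_assoc, mul_smul_comm, hT, hTE, hET, hE.eq]
  module

theorem lagrangeProj_mul_lagrangeProj (hT : T * T = (μ₁ + μ₂) • T - (μ₁ * μ₂) • E) :
    lagrangeProj E T μ₁ μ₂ * lagrangeProj E T μ₂ μ₁ = 0 := by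
  rw [lagrangeProj, lagrangeProj, smul_mul_smul_comm,
    sub_smul_mul_sub_smul_eq_zero hE hTE hET (by rw [add_comm, mul_comm, hT]), smul_zero]

theorem isIdempotentElem_lagrangeProj (hT : T * T = (μ₁ + μ₂) • T - (μ₁ * μ₂) • E)
    (hμ : μ₁ ≠ μ₂) : IsIdempotentElem (lagrangeProj E T μ₁ μ₂) := by
  have hsq : (T - μ₂ • E) * (T - μ₂ • E) = (μ₁ - μ₂) • (T - μ₂ • E) := by
    rw [← sub_eq_zero, ← sub_smul_mul_sub_smul_eq_zero hE hTE hET hT]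
    simp only [mul_sub, sub_mul, smul_mul_assoc, mul_smul_comm, hTE, hET, hE.eq]
    module
  rw [IsIdempotentElem, lagrangeProj, smul_mul_smul_comm, hsq, smul_smul]
  have : μ₁ - μ₂ ≠ 0 := sub_ne_zero.mpr hμ
  congr 1
  field_simp

end Quadratic

end LagrangeProj

section BanachAlgebra

variable {𝔸 : Type*} [NormedRing 𝔸] [NormedAlgebra ℂ 𝔸] [CompleteSpace 𝔸]

theorem exp_add_smul_of_isIdempotentElem {a P : 𝔸} (hP : IsIdempotentElem P)
    (haP : a * P = 0) (hPa : P * a = 0) (z : ℂ) :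
    NormedSpace.exp (a + z • P) = NormedSpace.exp a + (Complex.exp z - 1) • P := by
  have hz : HasSum (fun n : ℕ => ((n.factorial : ℂ)⁻¹ * z ^ n) • P) (Complex.exp z • P) := by
    rw [Complex.exp_eq_exp_ℂ]
    simpa [smul_eq_mul] using (NormedSpace.exp_series_hasSum_exp' (𝕂 := ℂ) z).smul_const P
  have hterm : ∀ n : ℕ, (n.factorial : ℂ)⁻¹ • (a + z • P) ^ n =
      (n.factorial : ℂ)⁻¹ • a ^ n + ((n.factorial : ℂ)⁻¹ * z ^ n) • P -
        if n = 0 then P else 0 := by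
    rintro (_ | n)
    · simp
    · rw [add_smul_pow_succ_of_isIdempotentElem hP haP hPa, if_neg n.succ_ne_zero, sub_zero,
        smul_add, smul_smul]
  have hexp := NormedSpace.exp_series_hasSum_exp' (𝕂 := ℂ) (a + z • P)
  simp only [hterm] at hexp
  rw [hexp.unique (((NormedSpace.exp_series_hasSum_exp' a).add hz).sub (hasSum_ite_eq 0 P)),
    sub_smul, one_smul, add_sub_assoc]

theorem exp_smul_of_mul_eq_smul {M P : 𝔸} {μ : ℂ} (hP : IsIdempotentElem P)
    (hMP : M * P = μ • P) (hPM : P * M = μ • P) (z : ℂ) :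
    NormedSpace.exp (z • M) =
      NormedSpace.exp (z • (M - μ • P)) + (Complex.exp (z * μ) - 1) • P := by
  have hsplit : z • M = z • (M - μ • P) + (z * μ) • P := by module
  rw [hsplit, exp_add_smul_of_isIdempotentElem hP]
  · simp [sub_mul, hMP, hP.eq]
  · simp [mul_sub, hPM, hP.eq]

theorem exp_smul_of_mul_self_eq {M E T : 𝔸} {μ₁ μ₂ : ℂ} (hE : IsIdempotentElem E)
    (hME : M * E = T) (hEM : E * M = T) (hT : T * T = (μ₁ + μ₂) • T - (μ₁ * μ₂) • E)
    (hμ : μ₁ ≠ μ₂) (z : ℂ) :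
    NormedSpace.exp (z • M) = NormedSpace.exp (z • (M - T)) - E +
      Complex.exp (z * μ₁) • lagrangeProj E T μ₁ μ₂ +
      Complex.exp (z * μ₂) • lagrangeProj E T μ₂ μ₁ := by
  have hTE : T * E = T := by rw [← hME, mul_assoc, hE.eq]
  have hET : E * T = T := by rw [← hEM, ← mul_assoc, hE.eq]
  have hT' : T * T = (μ₂ + μ₁) • T - (μ₂ * μ₁) • E := by rw [add_comm, mul_comm, hT]
  have haE : (M - T) * E = 0 := by rw [sub_mul, hME, hTE, sub_self]
  have hEa : E * (M - T) = 0 := by rw [mul_sub, hEM, hET, sub_self]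
  have haT : (M - T) * T = 0 := by simpa [mul_assoc, hET] using congrArg (· * T) haE
  have hTa : T * (M - T) = 0 := by simpa [← mul_assoc, hTE] using congrArg (T * ·) hEa
  have hsplit : z • M = z • (M - T) + (z * μ₁) • lagrangeProj E T μ₁ μ₂ +
      (z * μ₂) • lagrangeProj E T μ₂ μ₁ := by
    rw [mul_smul, mul_smul, add_assoc, ← smul_add, ← smul_add,
      smul_lagrangeProj_add_smul_lagrangeProj hμ, sub_add_cancel]
  rw [hsplit,
    exp_add_smul_of_isIdempotentElem (isIdempotentElem_lagrangeProj hE hTE hET hT' hμ.symm)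
      (by simp [add_mul, mul_lagrangeProj_eq_zero haE haT,
        lagrangeProj_mul_lagrangeProj hE hTE hET hT])
      (by simp [mul_add, lagrangeProj_mul_eq_zero hEa hTa,
        lagrangeProj_mul_lagrangeProj hE hTE hET hT']),
    exp_add_smul_of_isIdempotentElem (isIdempotentElem_lagrangeProj hE hTE hET hT hμ)
      (by simp [mul_lagrangeProj_eq_zero haE haT]) (by simp [lagrangeProj_mul_eq_zero hEa hTa])]
  linear_combination (norm := module) (-1 : ℂ) • lagrangeProj_add_lagrangeProj (E := E) (T := T) hμ

end BanachAlgebra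

local notation "𝟙" => Matrix.of fun _ _ => (1 : ℂ)

namespace Matrix

variable {ι κ ν α : Type*}

section AllOnes

variable [Fintype κ] [NonAssocSemiring α]

theorem mul_of_one_of_sum_row_eq {M : Matrix ι κ α} {s : α} (h : ∀ i, ∑ j, M i j = s) :
    M * of (fun (_ : κ) (_ : ν) => (1 : α)) = s • of fun _ _ => 1 := by
  ext i j
  simp [mul_apply, h i]

theorem of_one_mul_of_sum_col_eq {M : Matrix κ ν α} {s : α} (h : ∀ j, ∑ i, M i j = s) :
    of (fun (_ : ι) (_ : κ) => (1 : α)) * M = s • of fun _ _ => 1 := by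
  ext i j
  simp [mul_apply, h j]

theorem of_one_mul_of_one :
    of (fun (_ : ι) (_ : κ) => (1 : α)) * of (fun (_ : κ) (_ : ν) => (1 : α)) =
      (Fintype.card κ : α) • of fun _ _ => 1 :=
  mul_of_one_of_sum_row_eq fun _ => by simp

end AllOnes

section RegularMatrix

variable [Fintype ι] {A : Matrix ι ι ℝ} {k : ℝ}

theorem map_ofReal_mul_of_one (hrow : ∀ i, ∑ j, A i j = k) :
    A.map ((↑) : ℝ → ℂ) * (𝟙 : Matrix ι ν ℂ) = (k : ℂ) • 𝟙 :=
  mul_of_one_of_sum_row_eq fun i => by simp [← Complex.ofReal_sum, hrow]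

theorem of_one_mul_map_ofReal (hA : A.IsSymm) (hrow : ∀ i, ∑ j, A i j = k) :
    (𝟙 : Matrix ν ι ℂ) * A.map ((↑) : ℝ → ℂ) = (k : ℂ) • 𝟙 :=
  of_one_mul_of_sum_col_eq fun j => by simp [← Complex.ofReal_sum, hA.apply, hrow]

end RegularMatrix

section BlockDiagonal

variable [Fintype ι] [Fintype κ] [DecidableEq ι] [DecidableEq κ]

variable (ι κ) in
def fromBlocksRingHom (α : Type*) [Semiring α] :
    Matrix ι ι α × Matrix κ κ α →+* Matrix (ι ⊕ κ) (ι ⊕ κ) α where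
  toFun p := fromBlocks p.1 0 0 p.2
  map_one' := fromBlocks_one
  map_mul' p q := by simp [fromBlocks_multiply]
  map_zero' := fromBlocks_zero
  map_add' p q := by simp [fromBlocks_add]

-- Matrices carry no global norm; the `ℓ∞` operator norm lets us apply the Banach-algebra lemmas.
open scoped Matrix.Norms.Operator in
theorem exp_fromBlocks_zero_zero (A : Matrix ι ι ℂ) (D : Matrix κ κ ℂ) :
    NormedSpace.exp (fromBlocks A 0 0 D) =
      fromBlocks (NormedSpace.exp A) 0 0 (NormedSpace.exp D) := by
  have h := NormedSpace.map_exp (𝔸 := Matrix ι ι ℂ × Matrix κ κ ℂ) (fromBlocksRingHom ι κ ℂ)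
    (continuous_fst.matrix_fromBlocks continuous_const continuous_const continuous_snd) (A, D)
  have hAD : NormedSpace.exp (A, D) = (NormedSpace.exp A, NormedSpace.exp D) :=
    Prod.ext (Prod.fst_exp _) (Prod.snd_exp _)
  exact h.symm.trans (congrArg (fromBlocksRingHom ι κ ℂ) hAD)

end BlockDiagonal

end Matrix

noncomputable def constProj (m : ℕ) : Matrix (Fin m) (Fin m) ℂ := (m : ℂ)⁻¹ • 𝟙

theorem constProj_apply (m : ℕ) (i j : Fin m) : constProj m i j = (m : ℂ)⁻¹ := by
  simp [constProj]

theorem isIdempotentElem_constProj {m : ℕ} (hm : m ≠ 0) : IsIdempotentElem (constProj m) := by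
  rw [IsIdempotentElem, constProj, smul_mul_smul_comm, of_one_mul_of_one, Fintype.card_fin,
    smul_smul]
  congr 1
  field_simp

open scoped Matrix.Norms.Operator in
theorem exp_smul_map_ofReal_of_sum_row {m : ℕ} (hm : m ≠ 0) {A : Matrix (Fin m) (Fin m) ℝ}
    {k : ℝ} (hA : A.IsSymm) (hrow : ∀ i, ∑ j, A i j = k) (z : ℂ) :
    NormedSpace.exp (z • A.map ((↑) : ℝ → ℂ)) =
      NormedSpace.exp (z • (A.map ((↑) : ℝ → ℂ) - (k : ℂ) • constProj m)) +
        (Complex.exp (z * k) - 1) • constProj m :=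
  exp_smul_of_mul_eq_smul (isIdempotentElem_constProj hm)
    (by rw [constProj, mul_smul_comm, map_ofReal_mul_of_one hrow, smul_comm])
    (by rw [constProj, smul_mul_assoc, of_one_mul_map_ofReal hA hrow, smul_comm]) z

section Join

variable {m n : ℕ}

noncomputable def joinProj (m n : ℕ) : Matrix (Fin m ⊕ Fin n) (Fin m ⊕ Fin n) ℂ :=
  fromBlocks (constProj m) 0 0 (constProj n)

noncomputable def joinCompression (m n : ℕ) (k ℓ : ℝ) :
    Matrix (Fin m ⊕ Fin n) (Fin m ⊕ Fin n) ℂ :=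
  fromBlocks ((k : ℂ) • constProj m) 𝟙 𝟙 ((ℓ : ℂ) • constProj n)

theorem joinA_map_ofReal (AX : Matrix (Fin m) (Fin m) ℝ) (AY : Matrix (Fin n) (Fin n) ℝ) :
    (joinA m n AX AY).map ((↑) : ℝ → ℂ) = fromBlocks (AX.map (↑)) 𝟙 𝟙 (AY.map (↑)) := by
  rw [joinA, fromBlocks_map]
  rfl

theorem isIdempotentElem_joinProj (hm : m ≠ 0) (hn : n ≠ 0) :
    IsIdempotentElem (joinProj m n) := by
  rw [IsIdempotentElem, joinProj, fromBlocks_multiply, (isIdempotentElem_constProj hm).eq,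
    (isIdempotentElem_constProj hn).eq]
  simp

variable {k ℓ : ℝ} {AX : Matrix (Fin m) (Fin m) ℝ} {AY : Matrix (Fin n) (Fin n) ℝ}

theorem joinA_map_ofReal_mul_joinProj (hm : m ≠ 0) (hn : n ≠ 0)
    (hAXrow : ∀ i, ∑ j, AX i j = k) (hAYrow : ∀ i, ∑ j, AY i j = ℓ) :
    (joinA m n AX AY).map ((↑) : ℝ → ℂ) * joinProj m n = joinCompression m n k ℓ := by
  rw [joinA_map_ofReal, joinProj, joinCompression, fromBlocks_multiply]
  simp only [constProj, Matrix.mul_smul, map_ofReal_mul_of_one hAXrow,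
    map_ofReal_mul_of_one hAYrow, of_one_mul_of_one, Fintype.card_fin, smul_smul,
    Matrix.mul_zero, zero_add, add_zero]
  congr 1 <;> match_scalars <;> field_simp

theorem joinProj_mul_joinA_map_ofReal (hm : m ≠ 0) (hn : n ≠ 0)
    (hAXsymm : AX.IsSymm) (hAXrow : ∀ i, ∑ j, AX i j = k)
    (hAYsymm : AY.IsSymm) (hAYrow : ∀ i, ∑ j, AY i j = ℓ) :
    joinProj m n * (joinA m n AX AY).map ((↑) : ℝ → ℂ) = joinCompression m n k ℓ := by
  rw [joinA_map_ofReal, joinProj, joinCompression, fromBlocks_multiply]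
  simp only [constProj, Matrix.smul_mul, of_one_mul_map_ofReal hAXsymm hAXrow,
    of_one_mul_map_ofReal hAYsymm hAYrow, of_one_mul_of_one, Fintype.card_fin, smul_smul,
    Matrix.zero_mul, zero_add, add_zero]
  congr 1 <;> match_scalars <;> field_simp

theorem joinCompression_mul_self (hm : m ≠ 0) (hn : n ≠ 0) {μ₁ μ₂ : ℝ}
    (hsum : μ₁ + μ₂ = k + ℓ) (hprod : μ₁ * μ₂ = k * ℓ - m * n) :
    joinCompression m n k ℓ * joinCompression m n k ℓ =
      ((μ₁ : ℂ) + μ₂) • joinCompression m n k ℓ - ((μ₁ : ℂ) * μ₂) • joinProj m n := by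
  have hsumC : (μ₁ : ℂ) + μ₂ = k + ℓ := by exact_mod_cast hsum
  have hprodC : (μ₁ : ℂ) * μ₂ = k * ℓ - m * n := by exact_mod_cast hprod
  rw [eq_sub_iff_add_eq, joinCompression, joinProj, fromBlocks_multiply, fromBlocks_smul,
    fromBlocks_smul, fromBlocks_add]
  simp only [constProj, Matrix.mul_smul, Matrix.smul_mul, of_one_mul_of_one, Fintype.card_fin,
    smul_smul, smul_zero, add_zero]
  refine fromBlocks_inj.mpr ⟨?_, ?_, ?_, ?_⟩ <;> match_scalars <;> field_simp
  · linear_combination (-(k : ℂ)) * hsumC + hprodC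
  · linear_combination -hsumC
  · linear_combination -hsumC
  · linear_combination (-(ℓ : ℂ)) * hsumC + hprodC

theorem joinA_map_ofReal_sub_joinCompression :
    (joinA m n AX AY).map ((↑) : ℝ → ℂ) - joinCompression m n k ℓ =
      fromBlocks (AX.map (↑) - (k : ℂ) • constProj m) 0 0 (AY.map (↑) - (ℓ : ℂ) • constProj n) := by
  rw [joinA_map_ofReal, joinCompression, sub_eq_add_neg, fromBlocks_neg, fromBlocks_add]
  simp [sub_eq_add_neg]

open scoped Matrix.Norms.Operator in
theorem exp_smul_joinA_inl_inl (hm : m ≠ 0) (hn : n ≠ 0)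
    (hAXsymm : AX.IsSymm) (hAXrow : ∀ i, ∑ j, AX i j = k)
    (hAYsymm : AY.IsSymm) (hAYrow : ∀ i, ∑ j, AY i j = ℓ)
    {μ₁ μ₂ : ℝ} (hsum : μ₁ + μ₂ = k + ℓ) (hprod : μ₁ * μ₂ = k * ℓ - m * n) (hμ : μ₁ ≠ μ₂)
    (z : ℂ) (u v : Fin m) :
    NormedSpace.exp (z • (joinA m n AX AY).map ((↑) : ℝ → ℂ)) (.inl u) (.inl v) =
      NormedSpace.exp (z • (AX.map ((↑) : ℝ → ℂ) - (k : ℂ) • constProj m)) u v - (m : ℂ)⁻¹ +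
        Complex.exp (z * μ₁) * ((k - μ₂) / ((μ₁ - μ₂) * m)) +
        Complex.exp (z * μ₂) * ((k - μ₁) / ((μ₂ - μ₁) * m)) := by
  have hexp := exp_smul_of_mul_self_eq (isIdempotentElem_joinProj hm hn)
    (joinA_map_ofReal_mul_joinProj hm hn hAXrow hAYrow)
    (joinProj_mul_joinA_map_ofReal hm hn hAXsymm hAXrow hAYsymm hAYrow)
    (joinCompression_mul_self hm hn hsum hprod) (Complex.ofReal_injective.ne hμ) z
  -- `hexp` is stated with the operator-norm instances, which agree with the matrix ones only
  -- up to unfolding, hence `erw` and the final `trans`.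
  erw [joinA_map_ofReal_sub_joinCompression, fromBlocks_smul, smul_zero, smul_zero,
    exp_fromBlocks_zero_zero] at hexp
  refine (congr_fun₂ hexp (.inl u) (.inl v)).trans ?_
  have hμ₁₂ : (μ₁ : ℂ) - μ₂ ≠ 0 := sub_ne_zero.mpr (Complex.ofReal_injective.ne hμ)
  have hμ₂₁ : (μ₂ : ℂ) - μ₁ ≠ 0 := sub_ne_zero.mpr (Complex.ofReal_injective.ne hμ.symm)
  simp only [coe_smul, joinProj, lagrangeProj, joinCompression, Matrix.add_apply,
    Matrix.sub_apply, fromBlocks_apply₁₁, constProj_apply, Matrix.smul_apply, real_smul,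
    smul_eq_mul]
  field_simp

theorem transU_joinA_inl_inl_sub (hn : n ≠ 0)
    (hAXsymm : AX.IsSymm) (hAXrow : ∀ i, ∑ j, AX i j = k)
    (hAYsymm : AY.IsSymm) (hAYrow : ∀ i, ∑ j, AY i j = ℓ)
    {μ₁ μ₂ : ℝ} (hsum : μ₁ + μ₂ = k + ℓ) (hprod : μ₁ * μ₂ = k * ℓ - m * n) (t : ℝ)
    (u v : Fin m) :
    transU (joinA m n AX AY) t (.inl u) (.inl v) - transU AX t u v =
      (m : ℂ)⁻¹ * (((k - μ₂) / (μ₁ - μ₂)) • Complex.exp (I * t * μ₁) +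
        ((μ₁ - k) / (μ₁ - μ₂)) • Complex.exp (I * t * μ₂) - Complex.exp (I * t * k)) := by
  have hm : m ≠ 0 := u.pos.ne'
  have hμ : μ₁ ≠ μ₂ := by
    rintro rfl
    have hsq : (k - μ₁) ^ 2 = -(m * n) := by linear_combination (-k) * hsum + hprod
    have : (0 : ℝ) < m * n := by positivity
    linarith [sq_nonneg (k - μ₁)]
  have hμ₁₂ : (μ₁ : ℂ) - μ₂ ≠ 0 := sub_ne_zero.mpr (Complex.ofReal_injective.ne hμ)
  have hμ₂₁ : (μ₂ : ℂ) - μ₁ ≠ 0 := sub_ne_zero.mpr (Complex.ofReal_injective.ne hμ.symm)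
  rw [transU, transU, exp_smul_joinA_inl_inl hm hn hAXsymm hAXrow hAYsymm hAYrow hsum hprod hμ,
    exp_smul_map_ofReal_of_sum_row hm hAXsymm hAXrow]
  simp only [Matrix.add_apply, Matrix.smul_apply, constProj_apply, Complex.real_smul,
    smul_eq_mul]
  push_cast
  field_simp
  ring

end Join

section StrictConvex

variable {E : Type*} [NormedAddCommGroup E] [NormedSpace ℝ E] {x y z : E} {a b : ℝ}

theorem norm_smul_add_smul_sub_le_two (hx : ‖x‖ ≤ 1) (hy : ‖y‖ ≤ 1) (hz : ‖z‖ ≤ 1)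
    (ha : 0 ≤ a) (hb : 0 ≤ b) (hab : a + b = 1) : ‖a • x + b • y - z‖ ≤ 2 :=
  calc ‖a • x + b • y - z‖ ≤ ‖a • x‖ + ‖b • y‖ + ‖z‖ :=
        (norm_sub_le _ _).trans (by gcongr; exact norm_add_le _ _)
    _ = a * ‖x‖ + b * ‖y‖ + ‖z‖ := by
        rw [norm_smul, norm_smul, Real.norm_of_nonneg ha, Real.norm_of_nonneg hb]
    _ ≤ a * 1 + b * 1 + 1 := by gcongr
    _ = 2 := by linarith

theorem norm_smul_add_smul_sub_eq_two_iff [StrictConvexSpace ℝ E] (hx : ‖x‖ ≤ 1)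
    (hy : ‖y‖ ≤ 1) (hz : ‖z‖ = 1) (ha : 0 < a) (hb : 0 < b) (hab : a + b = 1) :
    ‖a • x + b • y - z‖ = 2 ↔ x = y ∧ y = -z := by
  constructor
  · intro h
    have hxy : x = y := by
      by_contra hne
      have := norm_combo_lt_of_ne hx hy hne ha hb hab
      linarith [norm_sub_le (a • x + b • y) z]
    refine ⟨hxy, ?_⟩
    subst hxy
    by_contra hne
    have hlt := norm_combo_lt_of_ne (a := 1 / 2) (b := 1 / 2) hx (by rw [norm_neg, hz]) hne
      (by norm_num) (by norm_num) (by norm_num)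
    have : a • x + b • x - z = (2 : ℝ) • ((1 / 2 : ℝ) • x + (1 / 2 : ℝ) • -z) := by
      rw [← add_smul, hab]; module
    rw [this, norm_smul] at h
    norm_num at h hlt
    linarith
  · rintro ⟨rfl, rfl⟩
    rw [show a • -z + b • -z - z = (-2 : ℝ) • z by rw [← add_smul, hab]; module, norm_smul, hz]
    norm_num

end StrictConvex

theorem norm_exp_I_mul_ofReal_mul_ofReal (t μ : ℝ) : ‖Complex.exp (I * t * μ)‖ = 1 := by
  rw [mul_assoc, ← Complex.ofReal_mul]
  exact Complex.norm_exp_I_mul_ofReal _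

theorem stmt19_general (m n : ℕ) (hn : 1 ≤ n) (k ℓ : ℝ)
    (AX : Matrix (Fin m) (Fin m) ℝ) (AY : Matrix (Fin n) (Fin n) ℝ)
    (hAXsymm : AX.IsSymm) (hAXrow : ∀ i, ∑ j, AX i j = k)
    (hAYsymm : AY.IsSymm) (hAYrow : ∀ i, ∑ j, AY i j = ℓ)
    (D lamPlus lamMinus : ℝ)
    (hD : D = (k - ℓ) ^ 2 + 4 * m * n)
    (hPlus : lamPlus = (k + ℓ + Real.sqrt D) / 2)
    (hMinus : lamMinus = (k + ℓ - Real.sqrt D) / 2) :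
    ∀ u v : Fin m,
      (∀ t : ℝ,
        ‖transU (joinA m n AX AY) t (Sum.inl u) (Sum.inl v)
            - transU AX t u v‖ ≤ 2 / m) ∧
      (∀ τ : ℝ,
        (‖transU (joinA m n AX AY) τ (Sum.inl u) (Sum.inl v)
              - transU AX τ u v‖ = 2 / m ↔
          (Complex.exp (Complex.I * (τ : ℂ) * (lamPlus : ℂ)) =
              Complex.exp (Complex.I * (τ : ℂ) * (lamMinus : ℂ)) ∧
            Complex.exp (Complex.I * (τ : ℂ) * (lamMinus : ℂ)) =
              -Complex.exp (Complex.I * (τ : ℂ) * (k : ℂ)))) ∧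
        ((Complex.exp (Complex.I * (τ : ℂ) * (lamPlus : ℂ)) =
              Complex.exp (Complex.I * (τ : ℂ) * (lamMinus : ℂ)) ∧
            Complex.exp (Complex.I * (τ : ℂ) * (lamMinus : ℂ)) =
              -Complex.exp (Complex.I * (τ : ℂ) * (k : ℂ))) →
          transU (joinA m n AX AY) τ (Sum.inl u) (Sum.inl v) - transU AX τ u v =
            -2 * Complex.exp (Complex.I * (τ : ℂ) * (k : ℂ)) / (m : ℂ))) := by
  intro u v
  have hm : (0 : ℝ) < m := Nat.cast_pos.mpr u.pos
  have hmn : (0 : ℝ) < m * n := mul_pos hm (by exact_mod_cast hn)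
  have hDsq : Real.sqrt D ^ 2 = D := Real.sq_sqrt (by rw [hD]; positivity)
  have hgap : |k - ℓ| < Real.sqrt D :=
    (Real.lt_sqrt (abs_nonneg _)).mpr (by rw [sq_abs, hD]; linarith)
  obtain ⟨hlo, hhi⟩ := abs_lt.mp hgap
  have hsum : lamPlus + lamMinus = k + ℓ := by rw [hPlus, hMinus]; ring
  have hprod : lamPlus * lamMinus = k * ℓ - m * n := by
    rw [hPlus, hMinus]; linear_combination (-1 / 4 : ℝ) * hDsq + (-1 / 4 : ℝ) * hD
  have hdiff := transU_joinA_inl_inl_sub (by omega) hAXsymm hAXrow hAYsymm hAYrow hsum hprod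
  have hp : 0 < (k - lamMinus) / (lamPlus - lamMinus) := div_pos (by linarith) (by linarith)
  have hq : 0 < (lamPlus - k) / (lamPlus - lamMinus) := div_pos (by linarith) (by linarith)
  have hpq : (k - lamMinus) / (lamPlus - lamMinus) + (lamPlus - k) / (lamPlus - lamMinus) = 1 := by
    rw [← add_div, div_eq_one_iff_eq (by linarith)]; ring
  have hunit := norm_exp_I_mul_ofReal_mul_ofReal
  have hscale (w : ℂ) : ‖(m : ℂ)⁻¹ * w‖ = ‖w‖ / m := by
    rw [norm_mul, norm_inv, Complex.norm_natCast, inv_mul_eq_div]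
  refine ⟨fun t => ?_, fun τ => ⟨?_, fun h => ?_⟩⟩
  · rw [hdiff, hscale]
    gcongr
    exact norm_smul_add_smul_sub_le_two (hunit _ _).le (hunit _ _).le (hunit _ _).le hp.le hq.le hpq
  · rw [hdiff, hscale, div_left_inj' hm.ne', norm_smul_add_smul_sub_eq_two_iff (hunit _ _).le
      (hunit _ _).le (hunit _ _) hp hq hpq]
  · rw [hdiff, h.1, h.2, ← add_smul, hpq, one_smul]
    ring

theorem stmt19 (m n : ℕ) (hm : 1 ≤ m) (hn : 1 ≤ n) (k ℓ : ℝ)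
    (AX : Matrix (Fin m) (Fin m) ℝ) (AY : Matrix (Fin n) (Fin n) ℝ)
    (hAXsymm : AX.IsSymm) (hAXnonneg : ∀ i j, 0 ≤ AX i j) (hAXrow : ∀ i, ∑ j, AX i j = k)
    (hAYsymm : AY.IsSymm) (hAYnonneg : ∀ i j, 0 ≤ AY i j) (hAYrow : ∀ i, ∑ j, AY i j = ℓ)
    (D lamPlus lamMinus : ℝ)
    (hD : D = (k - ℓ) ^ 2 + 4 * m * n)
    (hPlus : lamPlus = (k + ℓ + Real.sqrt D) / 2)
    (hMinus : lamMinus = (k + ℓ - Real.sqrt D) / 2) :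
    ∀ u v : Fin m,
      (∀ t : ℝ,
        ‖transU (joinA m n AX AY) t (Sum.inl u) (Sum.inl v)
            - transU AX t u v‖ ≤ 2 / m) ∧
      (∀ τ : ℝ,
        (‖transU (joinA m n AX AY) τ (Sum.inl u) (Sum.inl v)
              - transU AX τ u v‖ = 2 / m ↔
          (Complex.exp (Complex.I * (τ : ℂ) * (lamPlus : ℂ)) =
              Complex.exp (Complex.I * (τ : ℂ) * (lamMinus : ℂ)) ∧
            Complex.exp (Complex.I * (τ : ℂ) * (lamMinus : ℂ)) =
              -Complex.exp (Complex.I * (τ : ℂ) * (k : ℂ)))) ∧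
        ((Complex.exp (Complex.I * (τ : ℂ) * (lamPlus : ℂ)) =
              Complex.exp (Complex.I * (τ : ℂ) * (lamMinus : ℂ)) ∧
            Complex.exp (Complex.I * (τ : ℂ) * (lamMinus : ℂ)) =
              -Complex.exp (Complex.I * (τ : ℂ) * (k : ℂ))) →
          transU (joinA m n AX AY) τ (Sum.inl u) (Sum.inl v) - transU AX τ u v =
            -2 * Complex.exp (Complex.I * (τ : ℂ) * (k : ℂ)) / (m : ℂ))) :=
  stmt19_general m n hn k ℓ AX AY hAXsymm hAXrow hAYsymm hAYrow D lamPlus lamMinus hD hPlus hMinus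
end
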